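/- arXiv:2107.14798 — 6 statements merged into one kernel-verified Lean document; each statement's English description precedes it below -/
import Mathlib

section
/- Let L be a list with {2} ⊆ L ⊆ {0,1,2}. There exist real constants c > 0, C > 0 and a natural number n₀ such that for all n ≥ n₀: 2^{c·n²·log₂ n} ≤ f(n,3,4,L) ≤ 2^{C·n²·log₂ n}. -/
open Finset

/-- The family of all `r`-graphs on `[n]`: sets of `r`-element subsets of `Fin n`. -/
def rGraphs (n r : ℕ) : Finset (Finset (Finset (Fin n))) :=
  (Finset.univ.powersetCard r).powerset

/-- `G` is `(L,k)`-free: for every `k`-element vertex set `S`, the number of edges of `G`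
contained in `S` does not belong to `L`. -/
def IsLKFree (n k : ℕ) (L : Finset ℕ) (G : Finset (Finset (Fin n))) : Prop :=
  ∀ S : Finset (Fin n), S.card = k → (G.filter (fun e => e ⊆ S)).card ∉ L

instance (n k : ℕ) (L : Finset ℕ) : DecidablePred (IsLKFree n k L) := fun G =>
  inferInstanceAs (Decidable (∀ S : Finset (Fin n), S.card = k →
    (G.filter (fun e => e ⊆ S)).card ∉ L))

/-- `f(n,r,k,L)`: the number of `(L,k)`-free `r`-graphs on `[n]`. -/
def numFree (n r k : ℕ) (L : Finset ℕ) : ℕ :=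
  ((rGraphs n r).filter (IsLKFree n k L)).card

section Helpers
set_option linter.unusedSectionVars false
set_option linter.unusedVariables false

variable {α : Type*} [DecidableEq α] [LinearOrder α]

/-- count of `{x,y}` in `A` as 0/1 indicators -/
def cnt2 (A : Finset α) (x y : α) : ℕ :=
  (if x ∈ A then 1 else 0) + (if y ∈ A then 1 else 0)

def validA (V : Finset α) (t : α → α → ℕ) : Finset (Finset α) :=
  V.powerset.filter (fun A => ∀ x ∈ V, ∀ y ∈ V, x ≠ y → cnt2 A x y ≠ t x y)

theorem validA_card_le (V : Finset α) (t : α → α → ℕ) (ht : ∀ x y, t x y ≤ 2) :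
    (validA V t).card ≤ (V.card + 1) ^ 2 := by
  rcases (validA V t).eq_empty_or_nonempty with he | ⟨A₀, hA₀⟩
  · simp [he]
  have hval : ∀ A ∈ validA V t, A ⊆ V ∧
      ∀ x ∈ V, ∀ y ∈ V, x ≠ y → cnt2 A x y ≠ t x y := by
    intro A hA
    rw [validA, mem_filter, mem_powerset] at hA
    exact hA
  -- key step lemma
  have key : ∀ A ∈ validA V t, ∀ B ∈ validA V t, ∀ x, x ∈ A \ A₀ → x ∈ B \ A₀ →
      A \ A₀ ⊆ B \ A₀ := by
    intro A hA B hB x hxA hxB y hy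
    rcases eq_or_ne y x with rfl | hyx
    · exact hxB
    rw [mem_sdiff] at hxA hxB hy
    have hxV : x ∈ V := (hval A hA).1 hxA.1
    have hyV : y ∈ V := (hval A hA).1 hy.1
    have h2 : cnt2 A x y = 2 := by simp [cnt2, hxA.1, hy.1]
    have h0 : cnt2 A₀ x y = 0 := by simp [cnt2, hxA.2, hy.2]
    have ht2 : t x y ≠ 2 := fun h => (hval A hA).2 x hxV y hyV (Ne.symm hyx) (h2.trans h.symm)
    have ht0 : t x y ≠ 0 := fun h => (hval A₀ hA₀).2 x hxV y hyV (Ne.symm hyx) (h0.trans h.symm)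
    have ht1 : t x y = 1 := by have := ht x y; omega
    have hyB : y ∈ B := by
      by_contra hyB
      exact (hval B hB).2 x hxV y hyV (Ne.symm hyx) (by simp [cnt2, hxB.1, hyB, ht1])
    have hyA₀ : y ∉ A₀ := by
      intro hyA₀
      exact (hval A₀ hA₀).2 x hxV y hyV (Ne.symm hyx) (by simp [cnt2, hxA.2, hyA₀, ht1])
    exact mem_sdiff.2 ⟨hyB, hyA₀⟩
  have key' : ∀ A ∈ validA V t, ∀ B ∈ validA V t, ∀ x, x ∈ A₀ \ A → x ∈ A₀ \ B →
      A₀ \ A ⊆ A₀ \ B := by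
    intro A hA B hB x hxA hxB y hy
    rcases eq_or_ne y x with rfl | hyx
    · exact hxB
    rw [mem_sdiff] at hxA hxB hy
    have hxV : x ∈ V := (hval A₀ hA₀).1 hxA.1
    have hyV : y ∈ V := (hval A₀ hA₀).1 hy.1
    have h2 : cnt2 A₀ x y = 2 := by simp [cnt2, hxA.1, hy.1]
    have h0 : cnt2 A x y = 0 := by simp [cnt2, hxA.2, hy.2]
    have ht2 : t x y ≠ 2 := fun h => (hval A₀ hA₀).2 x hxV y hyV (Ne.symm hyx) (h2.trans h.symm)
    have ht0 : t x y ≠ 0 := fun h => (hval A hA).2 x hxV y hyV (Ne.symm hyx) (h0.trans h.symm)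
    have ht1 : t x y = 1 := by have := ht x y; omega
    have hyB : y ∉ B := by
      intro hyB
      exact (hval B hB).2 x hxV y hyV (Ne.symm hyx) (by simp [cnt2, hxB.2, hyB, ht1])
    exact mem_sdiff.2 ⟨hy.1, hyB⟩
  classical
  have hle := Finset.card_le_card_of_injOn
    (f := fun A => ((A \ A₀).min, (A₀ \ A).min))
    (t := (insert (⊤ : WithTop α) (V.image (fun a : α => (a : WithTop α)))) ×ˢ (insert (⊤ : WithTop α) (V.image (fun a : α => (a : WithTop α)))))
    ?_ ?_ (s := validA V t)
  · refine hle.trans ?_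
    rw [card_product]
    have h1 : (insert (⊤ : WithTop α) (V.image (fun a : α => (a : WithTop α)))).card ≤ V.card + 1 := by
      refine (card_insert_le _ _).trans ?_
      exact Nat.add_le_add_right card_image_le 1
    calc _ ≤ (V.card + 1) * (V.card + 1) := Nat.mul_le_mul h1 h1
      _ = (V.card + 1) ^ 2 := by ring
  · intro A hA
    rw [Finset.mem_coe, mem_product]
    dsimp only
    constructor
    · rcases (A \ A₀).eq_empty_or_nonempty with h | h
      · simp [h]
      · obtain ⟨a, ha⟩ := Finset.min_of_nonempty h
        have hmem : a ∈ A \ A₀ := Finset.mem_of_min ha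
        rw [ha]
        exact mem_insert_of_mem (mem_image.2 ⟨a, (hval A hA).1 (mem_sdiff.1 hmem).1, rfl⟩)
    · rcases (A₀ \ A).eq_empty_or_nonempty with h | h
      · simp [h]
      · obtain ⟨a, ha⟩ := Finset.min_of_nonempty h
        have hmem : a ∈ A₀ \ A := Finset.mem_of_min ha
        rw [ha]
        exact mem_insert_of_mem (mem_image.2 ⟨a, (hval A₀ hA₀).1 (mem_sdiff.1 hmem).1, rfl⟩)
  · intro A hA B hB hfeq
    simp only [Prod.mk.injEq] at hfeq
    have e1 : A \ A₀ = B \ A₀ := by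
      rcases (A \ A₀).eq_empty_or_nonempty with h | h
      · rcases (B \ A₀).eq_empty_or_nonempty with h' | h'
        · rw [h, h']
        · exfalso
          obtain ⟨a, ha⟩ := Finset.min_of_nonempty h'
          rw [h, ha] at hfeq
          simpa using hfeq.1
      · obtain ⟨a, ha⟩ := Finset.min_of_nonempty h
        have haA : a ∈ A \ A₀ := Finset.mem_of_min ha
        have hmin : (B \ A₀).min = a := by rw [← hfeq.1, ha]
        have haB : a ∈ B \ A₀ := Finset.mem_of_min hmin
        exact Subset.antisymm (key A hA B hB a haA haB) (key B hB A hA a haB haA)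
    have e2 : A₀ \ A = A₀ \ B := by
      rcases (A₀ \ A).eq_empty_or_nonempty with h | h
      · rcases (A₀ \ B).eq_empty_or_nonempty with h' | h'
        · rw [h, h']
        · exfalso
          obtain ⟨a, ha⟩ := Finset.min_of_nonempty h'
          rw [h, ha] at hfeq
          simpa using hfeq.2
      · obtain ⟨a, ha⟩ := Finset.min_of_nonempty h
        have haA : a ∈ A₀ \ A := Finset.mem_of_min ha
        have hmin : (A₀ \ B).min = a := by rw [← hfeq.2, ha]
        have haB : a ∈ A₀ \ B := Finset.mem_of_min hmin
        exact Subset.antisymm (key' A hA B hB a haA haB) (key' B hB A hA a haB haA)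
    ext a
    by_cases haA₀ : a ∈ A₀
    · constructor
      · intro haA
        by_contra haB
        have : a ∈ A₀ \ B := mem_sdiff.2 ⟨haA₀, haB⟩
        rw [← e2, mem_sdiff] at this
        exact this.2 haA
      · intro haB
        by_contra haA
        have : a ∈ A₀ \ A := mem_sdiff.2 ⟨haA₀, haA⟩
        rw [e2, mem_sdiff] at this
        exact this.2 haB
    · constructor
      · intro haA
        have : a ∈ A \ A₀ := mem_sdiff.2 ⟨haA, haA₀⟩
        rw [e1, mem_sdiff] at this
        exact this.1
      · intro haB
        have : a ∈ B \ A₀ := mem_sdiff.2 ⟨haB, haA₀⟩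
        rw [← e1, mem_sdiff] at this
        exact this.1

lemma pair_subset_triple {a b c : α} (hab : a ≠ b) (hac : a ≠ c) (hbc : b ≠ c)
    {p : Finset α} (hp2 : p.card = 2) (hsub : p ⊆ ({a, b, c} : Finset α)) :
    p = {a, b} ∨ p = {a, c} ∨ p = {b, c} := by
  obtain ⟨u, v, huv, rfl⟩ := Finset.card_eq_two.1 hp2
  have hu : u = a ∨ u = b ∨ u = c := by
    have := hsub (mem_insert_self u {v}); simpa using this
  have hv : v = a ∨ v = b ∨ v = c := by
    have := hsub (by simp : v ∈ ({u, v} : Finset α)); simpa using this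
  rcases hu with rfl | rfl | rfl <;> rcases hv with rfl | rfl | rfl <;>
    first
      | exact absurd rfl huv
      | simp [Finset.pair_comm]
lemma filter_subset_triple_card {N : Finset (Finset α)} (hN : ∀ p ∈ N, p.card = 2)
    {a b c : α} (hab : a ≠ b) (hac : a ≠ c) (hbc : b ≠ c) :
    (N.filter (· ⊆ ({a, b, c} : Finset α))).card =
      (if ({a, b} : Finset α) ∈ N then 1 else 0) + (if ({a, c} : Finset α) ∈ N then 1 else 0)
        + (if ({b, c} : Finset α) ∈ N then 1 else 0) := by
  have hne1 : ({a, b} : Finset α) ≠ {a, c} := by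
    intro h
    have : c ∈ ({a, b} : Finset α) := h ▸ (by simp)
    simp only [mem_insert, mem_singleton] at this
    rcases this with h' | h' <;> [exact hac h'.symm; exact hbc h'.symm]
  have hne2 : ({a, b} : Finset α) ≠ {b, c} := by
    intro h
    have : a ∈ ({b, c} : Finset α) := h ▸ (by simp)
    simp only [mem_insert, mem_singleton] at this
    rcases this with h' | h' <;> [exact hab h'; exact hac h']
  have hne3 : ({a, c} : Finset α) ≠ {b, c} := by
    intro h
    have : a ∈ ({b, c} : Finset α) := h ▸ (by simp)
    simp only [mem_insert, mem_singleton] at this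
    rcases this with h' | h' <;> [exact hab h'; exact hac h']
  have hset : N.filter (· ⊆ ({a, b, c} : Finset α)) =
      ({{a, b}, {a, c}, {b, c}} : Finset (Finset α)).filter (· ∈ N) := by
    ext p
    simp only [mem_filter, mem_insert, mem_singleton]
    constructor
    · rintro ⟨hpN, hsub⟩
      exact ⟨pair_subset_triple hab hac hbc (hN p hpN) hsub, hpN⟩
    · rintro ⟨h, hpN⟩
      refine ⟨hpN, ?_⟩
      rcases h with rfl | rfl | rfl <;> intro x hx <;> simp only [mem_insert, mem_singleton] at hx <;>
        rcases hx with rfl | rfl <;> simp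
  rw [hset, card_filter, Finset.sum_insert (by simp [hne1, hne2]),
    Finset.sum_insert (by simp [hne3]), Finset.sum_singleton]
  ring

def validN (W : Finset α) (h : Finset α → Bool) : Finset (Finset (Finset α)) :=
  (W.powersetCard 2).powerset.filter (fun N => ∀ T ∈ W.powerset, T.card = 3 →
    (N.filter (· ⊆ T)).card + (if h T then 1 else 0) ≠ 2)

lemma mem_validN {W : Finset α} {h : Finset α → Bool} {N : Finset (Finset α)} :
    N ∈ validN W h ↔ N ⊆ W.powersetCard 2 ∧ ∀ T ⊆ W, T.card = 3 →
      (N.filter (· ⊆ T)).card + (if h T then 1 else 0) ≠ 2 := by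
  simp [validN, mem_filter, mem_powerset]

theorem validN_card_le : ∀ (k : ℕ) (W : Finset α), W.card = k → ∀ (h : Finset α → Bool),
    (validN W h).card ≤ Nat.factorial k ^ 2 := by
  intro k
  induction k with
  | zero =>
    intro W hW h
    rw [card_eq_zero.1 hW]
    refine (card_filter_le _ _).trans ?_
    simp
  | succ m ih =>
    intro W hW h
    have hWne : W.Nonempty := by rw [← card_pos, hW]; omega
    obtain ⟨w, hw⟩ := hWne
    set W' := W.erase w with hW'def
    have hW' : W'.card = m := by rw [hW'def, card_erase_of_mem hw, hW]; rfl
    have hwW' : w ∉ W' := notMem_erase w W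
    have hW'W : W' ⊆ W := erase_subset w W
    classical
    -- data about members
    have hNdat : ∀ N ∈ validN W h, ∀ p ∈ N, p.card = 2 ∧ p ⊆ W := by
      intro N hN p hp
      have := (mem_validN.1 hN).1 hp
      rw [mem_powersetCard] at this
      exact ⟨this.2, this.1⟩
    -- the target sigma set
    set tf : Finset (Finset α) → α → α → ℕ := fun N' x y =>
      2 - (if h (insert w {x, y}) then 1 else 0)
        - (if ({x, y} : Finset α) ∈ N' then 1 else 0) with htf
    have key : (validN W h).card ≤
        ((validN W' h).sigma (fun N' => validA W' (tf N'))).card := by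
      apply Finset.card_le_card_of_injOn
        (fun N => (⟨N.filter (fun p => w ∉ p),
          W'.filter (fun x => ({w, x} : Finset α) ∈ N)⟩ :
            Σ _ : Finset (Finset α), Finset α))
      · -- maps to
        intro N hN
        rw [Finset.mem_coe, Finset.mem_sigma]
        dsimp only
        have hNsub := (mem_validN.1 hN).1
        have hNcond := (mem_validN.1 hN).2
        constructor
        · -- N' valid
          rw [mem_validN]
          constructor
          · intro p hp
            rw [mem_filter] at hp
            have hd := hNdat N hN p hp.1
            rw [mem_powersetCard]
            exact ⟨(Finset.subset_erase).2 ⟨hd.2, hp.2⟩, hd.1⟩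
          · intro T hT hT3
            have hwT : w ∉ T := fun hwT => hwW' (hT hwT)
            have hfe : (N.filter (fun p => w ∉ p)).filter (· ⊆ T) = N.filter (· ⊆ T) := by
              ext p
              simp only [mem_filter, and_assoc]
              constructor
              · rintro ⟨h1, _, h3⟩; exact ⟨h1, h3⟩
              · rintro ⟨h1, h3⟩; exact ⟨h1, fun hwp => hwT (h3 hwp), h3⟩
            rw [hfe]
            exact hNcond T (hT.trans hW'W) hT3
        · -- A valid
          rw [validA, mem_filter, mem_powerset]
          refine ⟨filter_subset _ _, ?_⟩
          intro x hx y hy hxy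
          have hxw : x ≠ w := (mem_erase.1 hx).1
          have hyw : y ≠ w := (mem_erase.1 hy).1
          have hT3 : (insert w {x, y} : Finset α).card = 3 := by
            rw [card_insert_of_notMem (by simp [Ne.symm hxw, Ne.symm hyw]), card_pair hxy]
          have hTsub : (insert w {x, y} : Finset α) ⊆ W := by
            apply insert_subset hw
            intro z hz
            simp only [mem_insert, mem_singleton] at hz
            rcases hz with rfl | rfl <;> [exact hW'W hx; exact hW'W hy]
          have hcond := hNcond (insert w {x, y}) hTsub hT3
          rw [filter_subset_triple_card (fun p hp => (hNdat N hN p hp).1)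
            (Ne.symm hxw) (Ne.symm hyw) hxy] at hcond
          have hxA : (({w, x} : Finset α) ∈ N) ↔
              x ∈ W'.filter (fun x => ({w, x} : Finset α) ∈ N) := by
            simp [mem_filter, hx]
          have hyA : (({w, y} : Finset α) ∈ N) ↔
              y ∈ W'.filter (fun x => ({w, x} : Finset α) ∈ N) := by
            simp [mem_filter, hy]
          have hxyN : (({x, y} : Finset α) ∈ N) ↔
              ({x, y} : Finset α) ∈ N.filter (fun p => w ∉ p) := by
            simp only [mem_filter]
            constructor
            · intro hmem; exact ⟨hmem, by simp [Ne.symm hxw, Ne.symm hyw]⟩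
            · exact fun hmem => hmem.1
          simp only [hxA, hyA, hxyN] at hcond
          simp only [htf, cnt2]
          split_ifs at hcond ⊢ <;> omega
      · -- injective
        intro N hN M hM hfeq
        rw [Sigma.mk.inj_iff] at hfeq
        have h1 : N.filter (fun p => w ∉ p) = M.filter (fun p => w ∉ p) := hfeq.1
        have h2 : W'.filter (fun x => ({w, x} : Finset α) ∈ N)
            = W'.filter (fun x => ({w, x} : Finset α) ∈ M) := eq_of_heq hfeq.2
        have hsub : ∀ P ∈ validN W h, ∀ Q ∈ validN W h,
            P.filter (fun p => w ∉ p) = Q.filter (fun p => w ∉ p) →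
            W'.filter (fun x => ({w, x} : Finset α) ∈ P)
              = W'.filter (fun x => ({w, x} : Finset α) ∈ Q) → P ⊆ Q := by
          intro P hP Q hQ e1 e2 p hp
          have hd := hNdat P hP p hp
          by_cases hwp : w ∈ p
          · have hx : ∃ x, p.erase w = {x} := by
              rw [← card_eq_one, card_erase_of_mem hwp, hd.1]
            obtain ⟨x, hx⟩ := hx
            have hxp : x ∈ p.erase w := hx ▸ mem_singleton_self x
            have hxw : x ≠ w := (mem_erase.1 hxp).1
            have hpe : p = ({w, x} : Finset α) := by
              rw [← insert_erase hwp, hx]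
            have hxW' : x ∈ W' := mem_erase.2 ⟨hxw, hd.2 (mem_of_mem_erase hxp)⟩
            have : x ∈ W'.filter (fun x => ({w, x} : Finset α) ∈ P) :=
              mem_filter.2 ⟨hxW', hpe ▸ hp⟩
            rw [e2, mem_filter] at this
            rw [hpe]
            exact this.2
          · have : p ∈ P.filter (fun p => w ∉ p) := mem_filter.2 ⟨hp, hwp⟩
            rw [e1, mem_filter] at this
            exact this.1
        exact Subset.antisymm (hsub N hN M hM h1 h2) (hsub M hM N hN h1.symm h2.symm)
    rw [Finset.card_sigma] at key
    have hbound : ∑ N' ∈ validN W' h, (validA W' (tf N')).card ≤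
        (validN W' h).card * (m + 1) ^ 2 := by
      rw [← smul_eq_mul]
      apply Finset.sum_le_card_nsmul
      intro N' _
      have := validA_card_le W' (tf N')
        (fun x y => (Nat.sub_le _ _).trans (Nat.sub_le _ _))
      rwa [hW'] at this
    refine key.trans (hbound.trans ?_)
    have := ih W' hW' h
    calc (validN W' h).card * (m + 1) ^ 2 ≤ Nat.factorial m ^ 2 * (m + 1) ^ 2 :=
          Nat.mul_le_mul_right _ this
      _ = Nat.factorial (m + 1) ^ 2 := by rw [Nat.factorial_succ]; ring

def free2 (V : Finset α) : Finset (Finset (Finset α)) :=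
  (V.powersetCard 3).powerset.filter (fun G => ∀ S ∈ V.powerset, S.card = 4 →
    (G.filter (· ⊆ S)).card ≠ 2)

lemma mem_free2 {V : Finset α} {G : Finset (Finset α)} :
    G ∈ free2 V ↔ G ⊆ V.powersetCard 3 ∧ ∀ S ⊆ V, S.card = 4 →
      (G.filter (· ⊆ S)).card ≠ 2 := by
  simp [free2, mem_filter, mem_powerset]

lemma bridge3 {V : Finset α} {G : Finset (Finset α)} (hG : G ⊆ V.powersetCard 3)
    {v : α} (hv : v ∈ V) {T : Finset α} (hTsub : T ⊆ V.erase v) (hT3 : T.card = 3) :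
    (G.filter (· ⊆ insert v T)).card =
      ((((V.erase v).powersetCard 2).filter (fun p => insert v p ∈ G)).filter (· ⊆ T)).card
        + (if T ∈ G then 1 else 0) := by
  classical
  have hGdat : ∀ e ∈ G, e.card = 3 ∧ e ⊆ V := by
    intro e he
    have := hG he
    rw [mem_powersetCard] at this
    exact ⟨this.2, this.1⟩
  have hvT : v ∉ T := fun hvT => (notMem_erase v V) (hTsub hvT)
  have hsplit : G.filter (· ⊆ insert v T) =
      (G.filter (fun e => e ⊆ insert v T ∧ v ∈ e)) ∪
        (G.filter (fun e => e ⊆ insert v T ∧ v ∉ e)) := by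
    rw [← filter_or]
    apply filter_congr
    intro e _
    by_cases hve : v ∈ e <;> simp [hve]
  have hdisj : Disjoint (G.filter (fun e => e ⊆ insert v T ∧ v ∈ e))
      (G.filter (fun e => e ⊆ insert v T ∧ v ∉ e)) := by
    rw [Finset.disjoint_left]
    intro e h1 h2
    rw [mem_filter] at h1 h2
    exact h2.2.2 h1.2.2
  rw [hsplit, card_union_of_disjoint hdisj]
  congr 1
  · -- part with v ∈ e
    apply Finset.card_bij (fun e _ => e.erase v)
    · intro e he
      rw [mem_filter] at he
      obtain ⟨heG, hesub, hve⟩ := he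
      rw [mem_filter]
      constructor
      · rw [mem_filter, mem_powersetCard]
        refine ⟨⟨?_, ?_⟩, ?_⟩
        · exact erase_subset_erase v (hGdat e heG).2
        · rw [card_erase_of_mem hve, (hGdat e heG).1]
        · rw [insert_erase hve]; exact heG
      · exact (Finset.subset_insert_iff).1 hesub
    · intro e1 he1 e2 he2 heq
      rw [mem_filter] at he1 he2
      rw [← insert_erase he1.2.2, heq, insert_erase he2.2.2]
    · intro p hp
      rw [mem_filter, mem_filter, mem_powersetCard] at hp
      obtain ⟨⟨⟨hpsub, hp2⟩, hpG⟩, hpT⟩ := hp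
      have hvp : v ∉ p := fun hvp => (notMem_erase v V) (hpsub hvp)
      refine ⟨insert v p, ?_, ?_⟩
      · rw [mem_filter]
        exact ⟨hpG, insert_subset_insert v hpT, mem_insert_self v p⟩
      · rw [erase_insert hvp]
  · -- part with v ∉ e
    have : G.filter (fun e => e ⊆ insert v T ∧ v ∉ e) = if T ∈ G then {T} else ∅ := by
      ext e
      rw [mem_filter]
      constructor
      · rintro ⟨heG, hesub, hve⟩
        have heT : e ⊆ T := (Finset.subset_insert_iff_of_notMem hve).1 hesub
        have heqT : e = T := Finset.eq_of_subset_of_card_le heT (by rw [hT3, (hGdat e heG).1])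
        rw [heqT] at heG ⊢
        simp [heG]
      · intro he
        by_cases hTG : T ∈ G
        · rw [if_pos hTG, mem_singleton] at he
          rw [he]
          exact ⟨hTG, subset_insert v T, hvT⟩
        · rw [if_neg hTG] at he
          exact absurd he (notMem_empty e)
    rw [this]
    split_ifs <;> simp

theorem free2_card_le : ∀ (k : ℕ) (V : Finset α), V.card = k →
    (free2 V).card ≤ Nat.factorial k ^ (2 * k) := by
  intro k
  induction k with
  | zero =>
    intro V hV
    rw [card_eq_zero.1 hV]
    refine (card_filter_le _ _).trans ?_
    simp
  | succ m ih =>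
    intro V hV
    have hVne : V.Nonempty := by rw [← card_pos, hV]; omega
    obtain ⟨v, hv⟩ := hVne
    set V' := V.erase v with hV'def
    have hV' : V'.card = m := by rw [hV'def, card_erase_of_mem hv, hV]; rfl
    have hvV' : v ∉ V' := notMem_erase v V
    have hV'V : V' ⊆ V := erase_subset v V
    classical
    have key : (free2 V).card ≤
        ((free2 V').sigma (fun G' => validN V' (fun T => decide (T ∈ G')))).card := by
      apply Finset.card_le_card_of_injOn
        (fun G => (⟨G.filter (fun e => v ∉ e),
          (V'.powersetCard 2).filter (fun p => insert v p ∈ G)⟩ :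
            Σ _ : Finset (Finset α), Finset (Finset α)))
      · intro G hG
        rw [Finset.mem_coe, Finset.mem_sigma]
        dsimp only
        have hGsub := (mem_free2.1 hG).1
        have hGcond := (mem_free2.1 hG).2
        have hGdat : ∀ e ∈ G, e.card = 3 ∧ e ⊆ V := by
          intro e he
          have := hGsub he
          rw [mem_powersetCard] at this
          exact ⟨this.2, this.1⟩
        constructor
        · rw [mem_free2]
          constructor
          · intro e he
            rw [mem_filter] at he
            rw [mem_powersetCard]
            exact ⟨(Finset.subset_erase).2 ⟨(hGdat e he.1).2, he.2⟩, (hGdat e he.1).1⟩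
          · intro S hS hS4
            have hvS : v ∉ S := fun hvS => hvV' (hS hvS)
            have hfe : (G.filter (fun e => v ∉ e)).filter (· ⊆ S) = G.filter (· ⊆ S) := by
              ext e
              simp only [mem_filter, and_assoc]
              constructor
              · rintro ⟨h1, _, h3⟩; exact ⟨h1, h3⟩
              · rintro ⟨h1, h3⟩; exact ⟨h1, fun hvp => hvS (h3 hvp), h3⟩
            rw [hfe]
            exact hGcond S (hS.trans hV'V) hS4
        · rw [mem_validN]
          refine ⟨filter_subset _ _, ?_⟩
          intro T hT hT3
          have hvT : v ∉ T := fun hvT => hvV' (hT hvT)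
          have hScard : (insert v T).card = 4 := by
            rw [card_insert_of_notMem hvT, hT3]
          have hSsub : insert v T ⊆ V := insert_subset hv (hT.trans hV'V)
          have hcond := hGcond (insert v T) hSsub hScard
          rw [bridge3 hGsub hv hT hT3] at hcond
          have hTG : (T ∈ G) ↔ (T ∈ G.filter (fun e => v ∉ e)) := by
            rw [mem_filter]
            exact ⟨fun h => ⟨h, hvT⟩, fun h => h.1⟩
          simp only [hTG, decide_eq_true_eq] at hcond ⊢
          exact hcond
      · intro G1 hG1 G2 hG2 hfeq
        rw [Sigma.mk.inj_iff] at hfeq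
        have h1 : G1.filter (fun e => v ∉ e) = G2.filter (fun e => v ∉ e) := hfeq.1
        have h2 : (V'.powersetCard 2).filter (fun p => insert v p ∈ G1)
            = (V'.powersetCard 2).filter (fun p => insert v p ∈ G2) := eq_of_heq hfeq.2
        have hsub : ∀ P, P ∈ free2 V → ∀ Q, Q ∈ free2 V →
            P.filter (fun e => v ∉ e) = Q.filter (fun e => v ∉ e) →
            (V'.powersetCard 2).filter (fun p => insert v p ∈ P)
              = (V'.powersetCard 2).filter (fun p => insert v p ∈ Q) → P ⊆ Q := by
          intro P hP Q hQ e1 e2 e he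
          have hPsub := (mem_free2.1 hP).1
          have hed : e.card = 3 ∧ e ⊆ V := by
            have := hPsub he
            rw [mem_powersetCard] at this
            exact ⟨this.2, this.1⟩
          by_cases hve : v ∈ e
          · have hp : e.erase v ∈ (V'.powersetCard 2).filter (fun p => insert v p ∈ P) := by
              rw [mem_filter, mem_powersetCard]
              refine ⟨⟨erase_subset_erase v hed.2, ?_⟩, ?_⟩
              · rw [card_erase_of_mem hve, hed.1]
              · rw [insert_erase hve]; exact he
            rw [e2, mem_filter] at hp
            have := hp.2
            rwa [insert_erase hve] at this
          · have : e ∈ P.filter (fun e => v ∉ e) := mem_filter.2 ⟨he, hve⟩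
            rw [e1, mem_filter] at this
            exact this.1
        exact Subset.antisymm (hsub G1 hG1 G2 hG2 h1 h2) (hsub G2 hG2 G1 hG1 h1.symm h2.symm)
    rw [Finset.card_sigma] at key
    have hbound : ∑ G' ∈ free2 V', (validN V' (fun T => decide (T ∈ G'))).card ≤
        (free2 V').card * Nat.factorial m ^ 2 := by
      rw [← smul_eq_mul]
      apply Finset.sum_le_card_nsmul
      intro G' _
      exact validN_card_le m V' hV' _
    refine key.trans (hbound.trans ?_)
    calc (free2 V').card * Nat.factorial m ^ 2
        ≤ Nat.factorial m ^ (2 * m) * Nat.factorial m ^ 2 :=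
          Nat.mul_le_mul_right _ (ih V' hV')
      _ = Nat.factorial m ^ (2 * (m + 1)) := by
          rw [← pow_add]; ring_nf
      _ ≤ Nat.factorial (m + 1) ^ (2 * (m + 1)) :=
          Nat.pow_le_pow_left (Nat.factorial_le (Nat.le_succ m)) _

end Helpers

section Lower
set_option linter.unusedVariables false

/-- all triples -/
def K3 (n : ℕ) : Finset (Finset (Fin n)) := (univ : Finset (Fin n)).powersetCard 3

def LL (n m : ℕ) : Finset (Finset (Finset (Fin n))) :=
  (K3 n).powerset.filter (fun S => S.card = m ∧
    ∀ e ∈ S, ∀ f ∈ S, e ≠ f → (e ∩ f).card ≤ 1)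

def LSeq (n m k : ℕ) : Finset (Fin m → Finset (Fin n)) :=
  univ.filter (fun f =>
    (∀ i : Fin m, (i : ℕ) < k → f i ∈ K3 n) ∧
    (∀ i j : Fin m, (i : ℕ) < k → (j : ℕ) < k → i ≠ j → (f i ∩ f j).card ≤ 1) ∧
    (∀ i : Fin m, k ≤ (i : ℕ) → f i = ∅))

lemma mem_K3 {n : ℕ} {e : Finset (Fin n)} : e ∈ K3 n ↔ e.card = 3 := by
  simp [K3, mem_powersetCard]

lemma badcard {n : ℕ} {e' : Finset (Fin n)} (he' : e'.card = 3) :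
    ((K3 n).filter (fun e => 2 ≤ (e ∩ e').card)).card ≤ 3 * n := by
  classical
  have hsub : (K3 n).filter (fun e => 2 ≤ (e ∩ e').card) ⊆
      (e'.powersetCard 2).biUnion (fun p => (K3 n).filter (fun e => p ⊆ e)) := by
    intro e he
    rw [mem_filter] at he
    obtain ⟨p, hp, hp2⟩ := Finset.exists_subset_card_eq he.2
    rw [mem_biUnion]
    refine ⟨p, ?_, ?_⟩
    · rw [mem_powersetCard]
      exact ⟨hp.trans (inter_subset_right), hp2⟩
    · rw [mem_filter]
      exact ⟨he.1, hp.trans (inter_subset_left)⟩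
  refine (card_le_card hsub).trans ((Finset.card_biUnion_le).trans ?_)
  have hcard : ∀ p ∈ e'.powersetCard 2, ((K3 n).filter (fun e => p ⊆ e)).card ≤ n := by
    intro p hp
    rw [mem_powersetCard] at hp
    have himg : (K3 n).filter (fun e => p ⊆ e) ⊆
        (univ : Finset (Fin n)).image (fun z => insert z p) := by
      intro e he
      rw [mem_filter, mem_K3] at he
      have hcd : (e \ p).card = 1 := by
        rw [card_sdiff_of_subset he.2, he.1, hp.2]
      obtain ⟨z, hz⟩ := card_eq_one.1 hcd
      rw [mem_image]
      refine ⟨z, mem_univ z, ?_⟩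
      have : e \ p ∪ p = e := sdiff_union_of_subset he.2
      rw [hz] at this
      rw [← this]
      ext x; simp [or_comm]
    refine (card_le_card himg).trans ?_
    refine (card_image_le).trans ?_
    simp
  calc ∑ p ∈ e'.powersetCard 2, ((K3 n).filter (fun e => p ⊆ e)).card
      ≤ ∑ p ∈ e'.powersetCard 2, n := Finset.sum_le_sum hcard
    _ = 3 * n := by
        rw [Finset.sum_const, card_powersetCard, he']
        simp [Nat.choose]
lemma ext_card {n m k : ℕ} (hk : k ≤ m) (f : Fin m → Finset (Fin n)) (hf : f ∈ LSeq n m k) :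
    (K3 n).card - 3 * n * m ≤
      ((K3 n).filter (fun e => ∀ i : Fin m, (i : ℕ) < k → (e ∩ f i).card ≤ 1)).card := by
  classical
  set Ext := (K3 n).filter (fun e => ∀ i : Fin m, (i : ℕ) < k → (e ∩ f i).card ≤ 1) with hE
  have hfK : ∀ i : Fin m, (i : ℕ) < k → f i ∈ K3 n := by
    rw [LSeq, mem_filter] at hf
    exact hf.2.1
  have hcomp : K3 n \ Ext ⊆
      (univ.filter (fun i : Fin m => (i : ℕ) < k)).biUnion
        (fun i => (K3 n).filter (fun e => 2 ≤ (e ∩ f i).card)) := by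
    intro e he
    rw [mem_sdiff, hE, mem_filter] at he
    have : ∃ i : Fin m, (i : ℕ) < k ∧ ¬ (e ∩ f i).card ≤ 1 := by
      by_contra hcon
      push_neg at hcon
      exact he.2 ⟨he.1, hcon⟩
    obtain ⟨i, hik, hcard⟩ := this
    rw [mem_biUnion]
    exact ⟨i, by simp [hik], by rw [mem_filter]; exact ⟨he.1, by omega⟩⟩
  have hcompcard : (K3 n \ Ext).card ≤ 3 * n * m := by
    refine (card_le_card hcomp).trans (Finset.card_biUnion_le.trans ?_)
    have : ∀ i ∈ univ.filter (fun i : Fin m => (i : ℕ) < k),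
        ((K3 n).filter (fun e => 2 ≤ (e ∩ f i).card)).card ≤ 3 * n := by
      intro i hi
      rw [mem_filter] at hi
      exact badcard (mem_K3.1 (hfK i hi.2))
    refine (Finset.sum_le_sum this).trans ?_
    rw [Finset.sum_const]
    have : (univ.filter (fun i : Fin m => (i : ℕ) < k)).card ≤ m := by
      refine (card_filter_le _ _).trans (by simp)
    calc (univ.filter (fun i : Fin m => (i : ℕ) < k)).card • (3 * n) ≤ m * (3 * n) :=
          Nat.mul_le_mul_right _ this
      _ = 3 * n * m := by ring
  have hEsub : Ext ⊆ K3 n := filter_subset _ _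
  have := card_sdiff_of_subset hEsub
  omega

lemma seq_step {n m : ℕ} {k : ℕ} (hk : k < m) :
    (LSeq n m k).card * ((K3 n).card - 3 * n * m) ≤ (LSeq n m (k + 1)).card := by
  classical
  set D := (K3 n).card - 3 * n * m with hD
  set Ext : (Fin m → Finset (Fin n)) → Finset (Finset (Fin n)) := fun f =>
    (K3 n).filter (fun e => ∀ i : Fin m, (i : ℕ) < k → (e ∩ f i).card ≤ 1) with hExt
  have hkm : (⟨k, hk⟩ : Fin m) = (⟨k, hk⟩ : Fin m) := rfl
  have key : ((LSeq n m k).sigma (fun f => Ext f)).card ≤ (LSeq n m (k + 1)).card := by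
    apply Finset.card_le_card_of_injOn (fun x => Function.update x.1 ⟨k, hk⟩ x.2)
    · rintro ⟨f, e⟩ hfe
      rw [Finset.mem_coe, Finset.mem_sigma] at hfe
      obtain ⟨hf, he⟩ := hfe
      rw [LSeq, mem_filter] at hf
      obtain ⟨-, hf1, hf2, hf3⟩ := hf
      rw [hExt, mem_filter] at he
      obtain ⟨heK, heI⟩ := he
      rw [Finset.mem_coe, LSeq, mem_filter]
      dsimp only
      refine ⟨mem_univ _, ?_, ?_, ?_⟩
      · intro i hi
        by_cases hik : i = ⟨k, hk⟩
        · rw [hik, Function.update_self]; exact heK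
        · rw [Function.update_of_ne hik]
          apply hf1
          have : (i : ℕ) ≠ k := fun hc => hik (Fin.ext hc)
          omega
      · intro i j hi hj hij
        by_cases hik : i = ⟨k, hk⟩
        · by_cases hjk : j = ⟨k, hk⟩
          · exact absurd (hik.trans hjk.symm) hij
          · rw [hik, Function.update_self, Function.update_of_ne hjk]
            have hjlt : (j : ℕ) < k := by
              have : (j : ℕ) ≠ k := fun hc => hjk (Fin.ext hc)
              omega
            exact heI j hjlt
        · rw [Function.update_of_ne hik]
          have hilt : (i : ℕ) < k := by
            have : (i : ℕ) ≠ k := fun hc => hik (Fin.ext hc)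
            omega
          by_cases hjk : j = ⟨k, hk⟩
          · rw [hjk, Function.update_self]
            rw [inter_comm]
            exact heI i hilt
          · rw [Function.update_of_ne hjk]
            have hjlt : (j : ℕ) < k := by
              have : (j : ℕ) ≠ k := fun hc => hjk (Fin.ext hc)
              omega
            exact hf2 i j hilt hjlt hij
      · intro i hi
        have hik : i ≠ ⟨k, hk⟩ := by
          intro hc
          rw [hc] at hi
          exact absurd hi (by simp)
        rw [Function.update_of_ne hik]
        apply hf3
        omega
    · rintro ⟨f, e⟩ hfe ⟨f', e'⟩ hfe' heq
      have hfe2 := Finset.mem_sigma.1 hfe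
      have hfe2' := Finset.mem_sigma.1 hfe'
      have hf3 : f ⟨k, hk⟩ = ∅ := by
        have := (mem_filter.1 hfe2.1).2.2.2
        exact this ⟨k, hk⟩ (le_refl k)
      have hf3' : f' ⟨k, hk⟩ = ∅ := by
        have := (mem_filter.1 hfe2'.1).2.2.2
        exact this ⟨k, hk⟩ (le_refl k)
      simp only at heq
      have hee : e = e' := by
        have := congrFun heq ⟨k, hk⟩
        rwa [Function.update_self, Function.update_self] at this
      have hff : f = f' := by
        funext i
        by_cases hik : i = ⟨k, hk⟩
        · rw [hik, hf3, hf3']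
        · have := congrFun heq i
          rwa [Function.update_of_ne hik, Function.update_of_ne hik] at this
      rw [Sigma.mk.inj_iff]
      exact ⟨hff, heq_of_eq hee⟩
  rw [Finset.card_sigma] at key
  refine le_trans ?_ key
  rw [← smul_eq_mul]
  apply Finset.card_nsmul_le_sum
  intro f hf
  exact ext_card (le_of_lt hk) f hf

lemma seq_ge {n m : ℕ} : ∀ k ≤ m, ((K3 n).card - 3 * n * m) ^ k ≤ (LSeq n m k).card := by
  intro k
  induction k with
  | zero =>
    intro _
    rw [pow_zero]
    rw [Nat.one_le_iff_ne_zero, ← Nat.pos_iff_ne_zero, card_pos]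
    refine ⟨fun _ => ∅, ?_⟩
    rw [LSeq, mem_filter]
    refine ⟨mem_univ _, ?_, ?_, ?_⟩ <;> intros <;> simp_all
  | succ k ih =>
    intro hk1
    have hk : k < m := by omega
    calc ((K3 n).card - 3 * n * m) ^ (k + 1)
        = ((K3 n).card - 3 * n * m) ^ k * ((K3 n).card - 3 * n * m) := by ring
      _ ≤ (LSeq n m k).card * ((K3 n).card - 3 * n * m) :=
          Nat.mul_le_mul_right _ (ih (by omega))
      _ ≤ (LSeq n m (k + 1)).card := seq_step hk

lemma lseq_le_LL {n m : ℕ} : (LSeq n m m).card ≤ m ^ m * (LL n m).card := by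
  classical
  have hdat : ∀ f ∈ LSeq n m m, (∀ i : Fin m, f i ∈ K3 n) ∧
      (∀ i j : Fin m, i ≠ j → (f i ∩ f j).card ≤ 1) := by
    intro f hf
    rw [LSeq, mem_filter] at hf
    exact ⟨fun i => hf.2.1 i i.isLt, fun i j hij => hf.2.2.1 i j i.isLt j.isLt hij⟩
  have hinjf : ∀ f ∈ LSeq n m m, ∀ i j : Fin m, i ≠ j → f i ≠ f j := by
    intro f hf i j hij heq
    have h1 := (hdat f hf).2 i j hij
    rw [heq, inter_self] at h1
    have := mem_K3.1 ((hdat f hf).1 j)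
    omega
  have hcardim : ∀ f ∈ LSeq n m m, ((univ : Finset (Fin m)).image f).card = m := by
    intro f hf
    rw [Finset.card_image_of_injOn, card_univ, Fintype.card_fin]
    intro i _ j _ heq
    by_contra hij
    exact hinjf f hf i j hij heq
  have himg : (LSeq n m m).image (fun f => (univ : Finset (Fin m)).image f) ⊆ LL n m := by
    intro a ha
    rw [mem_image] at ha
    obtain ⟨f, hf, rfl⟩ := ha
    rw [LL, mem_filter, mem_powerset]
    refine ⟨?_, hcardim f hf, ?_⟩
    · intro e he
      rw [mem_image] at he
      obtain ⟨i, _, rfl⟩ := he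
      exact (hdat f hf).1 i
    · intro e he g hg hne
      rw [mem_image] at he hg
      obtain ⟨i, _, rfl⟩ := he
      obtain ⟨j, _, rfl⟩ := hg
      have hij : i ≠ j := fun hc => hne (by rw [hc])
      exact (hdat f hf).2 i j hij
  have hfib : ∀ a ∈ (LSeq n m m).image (fun f => (univ : Finset (Fin m)).image f),
      ((LSeq n m m).filter (fun f => (univ : Finset (Fin m)).image f = a)).card ≤ m ^ m := by
    intro a ha
    rw [mem_image] at ha
    obtain ⟨f₀, hf₀, rfl⟩ := ha
    have hacard := hcardim f₀ hf₀
    set a := (univ : Finset (Fin m)).image f₀ with hadef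
    have hinj : ((LSeq n m m).filter (fun f => (univ : Finset (Fin m)).image f = a)).card ≤
        ((univ : Finset (Fin m)).pi (fun _ => a)).card := by
      apply Finset.card_le_card_of_injOn (fun f => fun i _ => f i)
      · intro f hf
        rw [Finset.mem_coe, mem_filter] at hf
        rw [Finset.mem_coe, Finset.mem_pi]
        intro i _
        rw [← hf.2]
        exact mem_image_of_mem f (mem_univ i)
      · intro f _ g _ heq
        funext i
        exact congrFun (congrFun heq i) (mem_univ i)
    refine hinj.trans ?_
    rw [Finset.card_pi, Finset.prod_const, hacard, card_univ, Fintype.card_fin]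
  calc (LSeq n m m).card
      ≤ m ^ m * ((LSeq n m m).image (fun f => (univ : Finset (Fin m)).image f)).card :=
        Finset.card_le_mul_card_image _ _ hfib
    _ ≤ m ^ m * (LL n m).card := Nat.mul_le_mul_left _ (card_le_card himg)

lemma LL_le_numFree {n m : ℕ} (L : Finset ℕ) (hL : L ⊆ ({0, 1, 2} : Finset ℕ)) :
    (LL n m).card ≤ numFree n 3 4 L := by
  classical
  rw [numFree]
  apply Finset.card_le_card_of_injOn (fun S => K3 n \ S)
  · intro S hS
    rw [Finset.mem_coe, LL, mem_filter, mem_powerset] at hS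
    obtain ⟨hSsub, _, hlin⟩ := hS
    rw [Finset.mem_coe, mem_filter]
    constructor
    · rw [rGraphs, mem_powerset]
      exact sdiff_subset
    · intro S₄ hS₄
      have h1 : (K3 n).filter (· ⊆ S₄) = S₄.powersetCard 3 := by
        ext e
        simp only [mem_filter, mem_K3, mem_powersetCard]
        tauto
      have h4 : ((K3 n).filter (· ⊆ S₄)).card = 4 := by
        rw [h1, card_powersetCard, hS₄]
        decide
      have hsplit : (K3 n \ S).filter (fun e => e ⊆ S₄) =
          (K3 n).filter (· ⊆ S₄) \ S.filter (· ⊆ S₄) := by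
        ext e
        simp only [mem_filter, mem_sdiff]
        tauto
      have hsub2 : S.filter (· ⊆ S₄) ⊆ (K3 n).filter (· ⊆ S₄) :=
        filter_subset_filter _ hSsub
      have hc1 : (S.filter (· ⊆ S₄)).card ≤ 1 := by
        rw [card_le_one]
        intro e he g hg
        rw [mem_filter] at he hg
        by_contra hne
        have hlin1 := hlin e he.1 g hg.1 hne
        have he3 : e.card = 3 := mem_K3.1 (hSsub he.1)
        have hg3 : g.card = 3 := mem_K3.1 (hSsub hg.1)
        have hunion : (e ∪ g).card ≤ 4 := by
          refine (card_le_card (union_subset he.2 hg.2)).trans ?_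
          rw [hS₄]
        have := Finset.card_union_add_card_inter e g
        omega
      rw [hsplit, card_sdiff_of_subset hsub2, h4]
      intro hmem
      have := hL hmem
      simp only [mem_insert, mem_singleton] at this
      omega
  · intro S hS T hT heq
    rw [Finset.mem_coe, LL, mem_filter, mem_powerset] at hS hT
    have h1 : K3 n \ (K3 n \ S) = S := Finset.sdiff_sdiff_eq_self hS.1
    have h2 : K3 n \ (K3 n \ T) = T := Finset.sdiff_sdiff_eq_self hT.1
    have heq' : K3 n \ S = K3 n \ T := heq
    rw [← h1, ← h2, heq']

lemma choose3_eq (a : ℕ) : (a + 3).choose 3 * 6 = (a + 3) * ((a + 2) * (a + 1)) := by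
  have h := Nat.choose_mul_factorial_mul_factorial (by omega : 3 ≤ a + 3)
  have hsub : a + 3 - 3 = a := by omega
  rw [hsub] at h
  have h36 : Nat.factorial 3 = 6 := by decide
  rw [h36] at h
  have hfact : Nat.factorial (a + 3) = ((a + 3) * ((a + 2) * (a + 1))) * Nat.factorial a := by
    have e3 : a + 3 = (a + 2) + 1 := rfl
    have e2 : a + 2 = (a + 1) + 1 := rfl
    calc Nat.factorial (a + 3) = (a + 3) * Nat.factorial (a + 2) := by
          rw [e3, Nat.factorial_succ]
      _ = (a + 3) * ((a + 2) * Nat.factorial (a + 1)) := by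
          rw [e2, Nat.factorial_succ]
      _ = (a + 3) * ((a + 2) * ((a + 1) * Nat.factorial a)) := by
          rw [Nat.factorial_succ]
      _ = ((a + 3) * ((a + 2) * (a + 1))) * Nat.factorial a := by ring
  rw [hfact] at h
  have h' : (a + 3).choose 3 * 6 * Nat.factorial a
      = ((a + 3) * ((a + 2) * (a + 1))) * Nat.factorial a := h
  exact Nat.eq_of_mul_eq_mul_right (Nat.factorial_pos a) h'

lemma lower_numeric {n : ℕ} (hn : 2000 ≤ n) :
    n * (n ^ 2 / 1000) ≤ (K3 n).card - 3 * n * (n ^ 2 / 1000) := by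
  set m := n ^ 2 / 1000 with hm
  have h1000 : 1000 * m ≤ n ^ 2 := by
    rw [hm, mul_comm]
    exact Nat.div_mul_le_self _ _
  have hK : (K3 n).card = n.choose 3 := by
    rw [K3, card_powersetCard, card_univ, Fintype.card_fin]
  obtain ⟨a, rfl⟩ : ∃ a, n = a + 3 := ⟨n - 3, by omega⟩
  have hch := choose3_eq a
  have hmain : 24 * ((a + 3) * m) ≤ (a + 3) * ((a + 2) * (a + 1)) := by
    have t2 : 24 * (a + 3) * (1000 * m) ≤ 24 * (a + 3) * ((a + 3) ^ 2) :=
      Nat.mul_le_mul_left _ h1000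
    have t3 : 24 * (a + 3) * ((a + 3) ^ 2) ≤ 1000 * ((a + 3) * ((a + 2) * (a + 1))) := by
      nlinarith [Nat.zero_le a]
    have t4 : 1000 * (24 * ((a + 3) * m)) ≤ 1000 * ((a + 3) * ((a + 2) * (a + 1))) := by
      calc 1000 * (24 * ((a + 3) * m)) = 24 * (a + 3) * (1000 * m) := by ring
        _ ≤ _ := t2.trans t3
    exact Nat.le_of_mul_le_mul_left t4 (by norm_num)
  have hch4 : 4 * ((a + 3) * m) ≤ (a + 3).choose 3 := by
    have : 4 * ((a + 3) * m) * 6 ≤ (a + 3).choose 3 * 6 := by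
      rw [hch]
      calc 4 * ((a + 3) * m) * 6 = 24 * ((a + 3) * m) := by ring
        _ ≤ _ := hmain
    exact Nat.le_of_mul_le_mul_right this (by norm_num)
  have h3 : 3 * (a + 3) * m = 3 * ((a + 3) * m) := by ring
  rw [hK, h3]
  omega

lemma lower_bound_main {n : ℕ} (hn : 2000 ≤ n) (L : Finset ℕ)
    (hL : L ⊆ ({0, 1, 2} : Finset ℕ)) :
    n ^ (n ^ 2 / 1000) ≤ numFree n 3 4 L := by
  set m := n ^ 2 / 1000 with hm
  have hm1 : 1 ≤ m := by
    rw [hm]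
    rw [Nat.le_div_iff_mul_le (by norm_num)]
    nlinarith
  have hD : n * m ≤ (K3 n).card - 3 * n * m := lower_numeric hn
  have main1 : (n * m) ^ m ≤ (LSeq n m m).card :=
    le_trans (Nat.pow_le_pow_left hD m) (seq_ge m le_rfl)
  have main2 : (LSeq n m m).card ≤ m ^ m * (LL n m).card := lseq_le_LL
  have main3 : n ^ m * m ^ m ≤ m ^ m * (LL n m).card := by
    calc n ^ m * m ^ m = (n * m) ^ m := (mul_pow n m m).symm
      _ ≤ (LSeq n m m).card := main1
      _ ≤ m ^ m * (LL n m).card := main2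
  have hpos : 0 < m ^ m := pow_pos (by omega) m
  have main4 : n ^ m ≤ (LL n m).card := by
    have h' : m ^ m * n ^ m ≤ m ^ m * (LL n m).card := by
      calc m ^ m * n ^ m = n ^ m * m ^ m := by ring
        _ ≤ m ^ m * (LL n m).card := main3
    exact Nat.le_of_mul_le_mul_left h' hpos
  exact main4.trans (LL_le_numFree L hL)

end Lower


lemma numFree_le_pow (L : Finset ℕ) (h2 : ({2} : Finset ℕ) ⊆ L) (n : ℕ) :
    numFree n 3 4 L ≤ Nat.factorial n ^ (2 * n) := by
  classical
  have hsub : (rGraphs n 3).filter (IsLKFree n 4 L) ⊆ free2 (univ : Finset (Fin n)) := by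
    intro G hG
    rw [mem_filter] at hG
    obtain ⟨hG1, hG2⟩ := hG
    rw [rGraphs, mem_powerset] at hG1
    rw [mem_free2]
    refine ⟨hG1, ?_⟩
    intro S _ hS4 hc2
    have := hG2 S hS4
    rw [hc2] at this
    exact this (h2 (mem_singleton_self 2))
  have hbound := free2_card_le n (univ : Finset (Fin n)) (by simp)
  exact (card_le_card hsub).trans hbound

/-- Claim: for any list `L` with `{2} ⊆ L ⊆ {0,1,2}`, `f(n,3,4,L) = 2^(Θ(n² log₂ n))`. -/
theorem count_L_with_2 (L : Finset ℕ) (h2 : ({2} : Finset ℕ) ⊆ L)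
    (hL : L ⊆ ({0, 1, 2} : Finset ℕ)) :
    ∃ c C : ℝ, 0 < c ∧ 0 < C ∧ ∃ n₀ : ℕ, ∀ n : ℕ, n₀ ≤ n →
      (2 : ℝ) ^ (c * (n : ℝ) ^ 2 * Real.logb 2 n) ≤ (numFree n 3 4 L : ℝ) ∧
      (numFree n 3 4 L : ℝ) ≤ (2 : ℝ) ^ (C * (n : ℝ) ^ 2 * Real.logb 2 n) := by
  refine ⟨1/2000, 2, by norm_num, by norm_num, 2000, ?_⟩
  intro n hn
  have hnR : (2000 : ℝ) ≤ (n : ℝ) := by exact_mod_cast hn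
  have hn1 : (1 : ℝ) ≤ (n : ℝ) := by linarith
  have hn0 : (0 : ℝ) < (n : ℝ) := by linarith
  have hlogb : 0 ≤ Real.logb 2 (n : ℝ) := Real.logb_nonneg (by norm_num) hn1
  have hx : (2 : ℝ) ^ (Real.logb 2 (n : ℝ)) = (n : ℝ) :=
    Real.rpow_logb (by norm_num) (by norm_num) hn0
  have hpow : ∀ k : ℕ, ((n : ℝ)) ^ (k : ℕ) = (2 : ℝ) ^ (Real.logb 2 (n : ℝ) * (k : ℝ)) := by
    intro k
    have h1 : ((2 : ℝ) ^ (Real.logb 2 (n : ℝ))) ^ (k : ℕ)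
        = (2 : ℝ) ^ (Real.logb 2 (n : ℝ) * (k : ℝ)) := by
      rw [← Real.rpow_natCast ((2 : ℝ) ^ (Real.logb 2 (n : ℝ))) k,
        ← Real.rpow_mul (by norm_num : (0 : ℝ) ≤ 2)]
    rw [← h1, hx]
  constructor
  · -- lower bound
    have hmN := lower_bound_main (n := n) hn L hL
    set m := n ^ 2 / 1000 with hm
    have hcast : ((n : ℝ)) ^ (m : ℕ) ≤ (numFree n 3 4 L : ℝ) := by
      have h0 : ((n ^ m : ℕ) : ℝ) ≤ ((numFree n 3 4 L : ℕ) : ℝ) := Nat.cast_le.2 hmN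
      push_cast at h0
      exact h0
    have hmlow : (n : ℝ) ^ 2 / 2000 ≤ (m : ℝ) := by
      have hdm : n ^ 2 ≤ 1000 * m + 999 := by
        have h1 := Nat.div_add_mod (n ^ 2) 1000
        have h2 : n ^ 2 % 1000 < 1000 := Nat.mod_lt _ (by norm_num)
        omega
      have h1 : (n : ℝ) ^ 2 ≤ 1000 * (m : ℝ) + 999 := by exact_mod_cast hdm
      nlinarith
    have hexp : 1 / 2000 * (n : ℝ) ^ 2 * Real.logb 2 (n : ℝ)
        ≤ Real.logb 2 (n : ℝ) * (m : ℝ) := by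
      have h1 : 1 / 2000 * (n : ℝ) ^ 2 ≤ (m : ℝ) := by linarith
      calc 1 / 2000 * (n : ℝ) ^ 2 * Real.logb 2 (n : ℝ)
          ≤ (m : ℝ) * Real.logb 2 (n : ℝ) := mul_le_mul_of_nonneg_right h1 hlogb
        _ = Real.logb 2 (n : ℝ) * (m : ℝ) := by ring
    calc (2 : ℝ) ^ (1 / 2000 * (n : ℝ) ^ 2 * Real.logb 2 (n : ℝ))
        ≤ (2 : ℝ) ^ (Real.logb 2 (n : ℝ) * (m : ℝ)) :=
          Real.rpow_le_rpow_of_exponent_le (by norm_num) hexp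
      _ = ((n : ℝ)) ^ (m : ℕ) := (hpow m).symm
      _ ≤ (numFree n 3 4 L : ℝ) := hcast
  · -- upper bound
    have hNat : numFree n 3 4 L ≤ n ^ (2 * n ^ 2) := by
      calc numFree n 3 4 L ≤ Nat.factorial n ^ (2 * n) := numFree_le_pow L h2 n
        _ ≤ (n ^ n) ^ (2 * n) := Nat.pow_le_pow_left (Nat.factorial_le_pow n) _
        _ = n ^ (2 * n ^ 2) := by rw [← pow_mul]; congr 1; ring
    have hcast2 : (numFree n 3 4 L : ℝ) ≤ ((n : ℝ)) ^ (2 * n ^ 2 : ℕ) := by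
      have h0 : ((numFree n 3 4 L : ℕ) : ℝ) ≤ ((n ^ (2 * n ^ 2) : ℕ) : ℝ) := Nat.cast_le.2 hNat
      push_cast at h0
      exact h0
    calc (numFree n 3 4 L : ℝ) ≤ ((n : ℝ)) ^ (2 * n ^ 2 : ℕ) := hcast2
      _ = (2 : ℝ) ^ (Real.logb 2 (n : ℝ) * ((2 * n ^ 2 : ℕ) : ℝ)) := hpow _
      _ = (2 : ℝ) ^ (2 * (n : ℝ) ^ 2 * Real.logb 2 (n : ℝ)) := by
          congr 1
          push_cast
          ring
end

section
/- For every n ≥ 4: f(n,3,4,{1,3}) = 2^{C(n−1,2)}, i.e., the number of 3-graphs on [n] in which no 4 vertices span exactly 1 or exactly 3 edges equals 2^{(n−1)(n−2)/2}. -/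
open Finset

set_option linter.unusedSectionVars false

namespace CountL13Aux

variable {V : Type*} [Fintype V] [DecidableEq V]

/-- Pairs avoiding the distinguished vertex `z`. -/
def pairsAway (z : V) : Finset (Finset V) := ((univ : Finset V).erase z).powersetCard 2

/-- The link of `z` in `G`, recorded as a set of pairs avoiding `z`. -/
def fwdMap (z : V) (G : Finset (Finset V)) : Finset (Finset V) :=
  (pairsAway z).filter (fun p => insert z p ∈ G)

/-- Reconstruct a 3-graph from a set of pairs avoiding `z`. -/
def invMap (z : V) (P : Finset (Finset V)) : Finset (Finset V) :=
  ((univ : Finset V).powersetCard 3).filter (fun t =>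
    if z ∈ t then t.erase z ∈ P else Odd ((t.powersetCard 2).filter (· ∈ P)).card)

lemma natCast_zmod2 (c : ℕ) : (c : ZMod 2) = if Odd c then 1 else 0 := by
  simp only [Nat.odd_iff]
  rw [← ZMod.natCast_mod]
  rcases Nat.mod_two_eq_zero_or_one c with h|h <;> rw [h] <;> simp

lemma even_iff_zmod2 (c : ℕ) : Even c ↔ (c : ZMod 2) = 0 := by
  rw [Nat.even_iff, ← ZMod.natCast_mod]
  rcases Nat.mod_two_eq_zero_or_one c with h|h <;> rw [h] <;> simp

lemma card_filter_zmod2 {α : Type*} (s : Finset α) (q : α → Prop) [DecidablePred q] :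
    (((s.filter q).card : ℕ) : ZMod 2) = ∑ x ∈ s, if q x then 1 else 0 := by
  rw [Finset.card_filter]
  push_cast
  rfl

/-- Decomposition of the sum over triples of a 4-set containing `z`. -/
lemma sum_triples_insert (z : V) (S : Finset V) (hS : S.card = 4) (hz : z ∈ S)
    (f : Finset V → ZMod 2) :
    ∑ t ∈ S.powersetCard 3, f t
      = f (S.erase z) + ∑ p ∈ (S.erase z).powersetCard 2, f (insert z p) := by
  rw [← Finset.sum_filter_add_sum_filter_not (S.powersetCard 3) (fun t => z ∉ t)]
  have h1 : (S.powersetCard 3).filter (fun t => z ∉ t) = {S.erase z} := by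
    ext t
    simp only [mem_filter, mem_powersetCard, mem_singleton]
    constructor
    · rintro ⟨⟨hts, hc⟩, hzt⟩
      apply Finset.eq_of_subset_of_card_le (Finset.subset_erase.mpr ⟨hts, hzt⟩)
      rw [Finset.card_erase_of_mem hz, hS, hc]
    · rintro rfl
      exact ⟨⟨Finset.erase_subset _ _, by rw [Finset.card_erase_of_mem hz, hS]⟩,
        Finset.notMem_erase _ _⟩
  have h2 : ∑ t ∈ (S.powersetCard 3).filter (fun t => ¬ z ∉ t), f t
      = ∑ p ∈ (S.erase z).powersetCard 2, f (insert z p) := by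
    refine Finset.sum_nbij' (fun t => t.erase z) (fun p => insert z p) ?_ ?_ ?_ ?_ ?_
    · intro t ht
      simp only [mem_filter, mem_powersetCard, not_not] at ht
      obtain ⟨⟨hts, hc⟩, hzt⟩ := ht
      rw [mem_powersetCard]
      exact ⟨Finset.erase_subset_erase _ hts, by rw [Finset.card_erase_of_mem hzt, hc]⟩
    · intro p hp
      rw [mem_powersetCard] at hp
      obtain ⟨hps, hc⟩ := hp
      have hzp : z ∉ p := fun h => Finset.notMem_erase z _ (hps h)
      simp only [mem_filter, mem_powersetCard, not_not]
      refine ⟨⟨?_, ?_⟩, Finset.mem_insert_self _ _⟩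
      · exact Finset.insert_subset hz (hps.trans (Finset.erase_subset _ _))
      · rw [Finset.card_insert_of_notMem hzp, hc]
    · intro t ht
      simp only [mem_filter, not_not] at ht
      exact Finset.insert_erase ht.2
    · intro p hp
      rw [mem_powersetCard] at hp
      have hzp : z ∉ p := fun h => Finset.notMem_erase z _ (hp.1 h)
      exact Finset.erase_insert hzp
    · intro t ht
      simp only [mem_filter, not_not] at ht
      rw [Finset.insert_erase ht.2]
  rw [h1, h2, Finset.sum_singleton]

/-- The number of triples of a 4-set containing a given pair is 2. -/
lemma card_triples_containing (S : Finset V) (hS : S.card = 4) (p : Finset V)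
    (hpS : p ⊆ S) (hp : p.card = 2) :
    ((S.powersetCard 3).filter (fun t => p ⊆ t)).card = 2 := by
  have himg : (S.powersetCard 3).filter (fun t => p ⊆ t) = (S \ p).image (fun y => insert y p) := by
    ext t
    simp only [mem_filter, mem_powersetCard, mem_image, mem_sdiff]
    constructor
    · rintro ⟨⟨hts, hc⟩, hpt⟩
      have hcd : (t \ p).card = 1 := by
        rw [Finset.card_sdiff_of_subset hpt, hc, hp]
      obtain ⟨y, hy⟩ := Finset.card_eq_one.mp hcd
      refine ⟨y, ⟨hts ?_, ?_⟩, ?_⟩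
      · have : y ∈ t \ p := hy ▸ Finset.mem_singleton_self y
        exact (Finset.mem_sdiff.mp this).1
      · have : y ∈ t \ p := hy ▸ Finset.mem_singleton_self y
        exact (Finset.mem_sdiff.mp this).2
      · have := Finset.union_sdiff_of_subset hpt
        rw [hy] at this
        rw [← this, Finset.union_comm, ← Finset.insert_eq]
    · rintro ⟨y, ⟨hyS, hyp⟩, rfl⟩
      exact ⟨⟨Finset.insert_subset hyS hpS, by rw [Finset.card_insert_of_notMem hyp, hp]⟩,
        Finset.subset_insert _ _⟩
  rw [himg, Finset.card_image_of_injOn, Finset.card_sdiff_of_subset hpS, hS, hp]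
  intro y hy y' hy' h
  simp only [Finset.coe_sdiff, Set.mem_diff, mem_coe] at hy hy'
  simp only at h
  have : y ∈ insert y' p := by rw [← h]; exact Finset.mem_insert_self y p
  rcases Finset.mem_insert.mp this with h' | h'
  · exact h'
  · exact absurd h' hy.2

/-- Double sum over (triple, pair-inside-triple) of a 4-set vanishes mod 2. -/
lemma sum_pairs_triples (S : Finset V) (hS : S.card = 4) (f : Finset V → ZMod 2) :
    ∑ t ∈ S.powersetCard 3, ∑ p ∈ t.powersetCard 2, f p = 0 := by
  have step1 : ∀ t ∈ S.powersetCard 3, ∑ p ∈ t.powersetCard 2, f p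
      = ∑ p ∈ S.powersetCard 2, if p ⊆ t then f p else 0 := by
    intro t ht
    rw [mem_powersetCard] at ht
    rw [← Finset.sum_filter]
    congr 1
    ext p
    simp only [mem_powersetCard, mem_filter]
    constructor
    · rintro ⟨hpt, hc⟩
      exact ⟨⟨hpt.trans ht.1, hc⟩, hpt⟩
    · rintro ⟨⟨_, hc⟩, hpt⟩
      exact ⟨hpt, hc⟩
  rw [Finset.sum_congr rfl step1, Finset.sum_comm]
  apply Finset.sum_eq_zero
  intro p hp
  rw [mem_powersetCard] at hp
  rw [← Finset.sum_filter, Finset.sum_const,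
    card_triples_containing S hS p hp.1 hp.2, two_smul, CharTwo.add_self_eq_zero]

lemma mem_rGraphs_iff {n : ℕ} (G : Finset (Finset (Fin n))) :
    G ∈ rGraphs n 3 ↔ ∀ e ∈ G, e.card = 3 := by
  simp only [rGraphs, Finset.mem_powerset, Finset.subset_iff, mem_powersetCard]
  constructor
  · intro h e he
    exact (h he).2
  · intro h e he
    exact ⟨Finset.subset_univ _, h e he⟩

lemma filter_subset_eq {n : ℕ} (G : Finset (Finset (Fin n))) (hG : ∀ e ∈ G, e.card = 3)
    (S : Finset (Fin n)) :
    G.filter (fun e => e ⊆ S) = (S.powersetCard 3).filter (· ∈ G) := by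
  ext e
  simp only [mem_filter, mem_powersetCard]
  constructor
  · rintro ⟨heG, heS⟩
    exact ⟨⟨heS, hG e heG⟩, heG⟩
  · rintro ⟨⟨heS, _⟩, heG⟩
    exact ⟨heG, heS⟩

lemma free_iff {n : ℕ} (G : Finset (Finset (Fin n))) (hG : ∀ e ∈ G, e.card = 3) :
    IsLKFree n 4 {1, 3} G ↔
      ∀ S : Finset (Fin n), S.card = 4 →
        (∑ t ∈ S.powersetCard 3, if t ∈ G then (1 : ZMod 2) else 0) = 0 := by
  unfold IsLKFree
  apply forall_congr'
  intro S
  apply imp_congr_right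
  intro hS
  rw [filter_subset_eq G hG S]
  set c := ((S.powersetCard 3).filter (· ∈ G)).card with hc
  have hle : c ≤ 4 := by
    calc c ≤ (S.powersetCard 3).card := Finset.card_filter_le _ _
    _ = 4 := by rw [Finset.card_powersetCard, hS]; decide
  have h1 : c ∉ ({1, 3} : Finset ℕ) ↔ Even c := by
    simp only [Finset.mem_insert, Finset.mem_singleton, Nat.even_iff]
    omega
  rw [h1, even_iff_zmod2, hc, card_filter_zmod2]



lemma mem_pairsAway (z : V) (p : Finset V) : p ∈ pairsAway z ↔ p.card = 2 ∧ z ∉ p := by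
  simp only [pairsAway, mem_powersetCard, Finset.subset_erase, Finset.subset_univ, true_and]
  tauto

lemma mem_invMap (z : V) (P : Finset (Finset V)) (t : Finset V) (ht : t.card = 3) :
    t ∈ invMap z P ↔
      (if z ∈ t then t.erase z ∈ P else Odd ((t.powersetCard 2).filter (· ∈ P)).card) := by
  simp only [invMap, mem_filter, mem_powersetCard, Finset.subset_univ, true_and, ht, and_iff_right_iff_imp]

lemma invMap_parity (z : V) (P : Finset (Finset V)) (S : Finset V) (hS : S.card = 4) :
    (∑ t ∈ S.powersetCard 3, if t ∈ invMap z P then (1 : ZMod 2) else 0) = 0 := by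
  by_cases hzS : z ∈ S
  · rw [sum_triples_insert z S hS hzS]
    have hc3 : (S.erase z).card = 3 := by rw [Finset.card_erase_of_mem hzS, hS]
    have hz1 : z ∉ S.erase z := Finset.notMem_erase _ _
    have h1 : (if S.erase z ∈ invMap z P then (1 : ZMod 2) else 0)
        = ∑ p ∈ (S.erase z).powersetCard 2, (if p ∈ P then (1 : ZMod 2) else 0) := by
      have e1 := mem_invMap z P (S.erase z) hc3
      rw [if_neg hz1] at e1
      simp only [e1]
      rw [← natCast_zmod2, card_filter_zmod2]
    have h2 : ∀ p ∈ (S.erase z).powersetCard 2,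
        (if insert z p ∈ invMap z P then (1 : ZMod 2) else 0) = (if p ∈ P then 1 else 0) := by
      intro p hp
      rw [mem_powersetCard] at hp
      have hzp : z ∉ p := fun h => Finset.notMem_erase z _ (hp.1 h)
      have hc : (insert z p).card = 3 := by rw [Finset.card_insert_of_notMem hzp, hp.2]
      have e := mem_invMap z P (insert z p) hc
      rw [if_pos (Finset.mem_insert_self z p), Finset.erase_insert hzp] at e
      simp only [e]
    rw [h1, Finset.sum_congr rfl h2, CharTwo.add_self_eq_zero]
  · have key : ∀ t ∈ S.powersetCard 3, (if t ∈ invMap z P then (1 : ZMod 2) else 0)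
        = ∑ p ∈ t.powersetCard 2, (if p ∈ P then (1 : ZMod 2) else 0) := by
      intro t ht
      rw [mem_powersetCard] at ht
      have hzt : z ∉ t := fun h => hzS (ht.1 h)
      have e := mem_invMap z P t ht.2
      rw [if_neg hzt] at e
      simp only [e]
      rw [← natCast_zmod2, card_filter_zmod2]
    rw [Finset.sum_congr rfl key]
    exact sum_pairs_triples S hS _

lemma right_inv (z : V) (P : Finset (Finset V)) (hP : ∀ p ∈ P, p ∈ pairsAway z) :
    fwdMap z (invMap z P) = P := by
  ext p
  simp only [fwdMap, mem_filter]
  constructor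
  · rintro ⟨hp, hmem⟩
    rw [mem_pairsAway] at hp
    have hc : (insert z p).card = 3 := by rw [Finset.card_insert_of_notMem hp.2, hp.1]
    rwa [mem_invMap z P _ hc, if_pos (Finset.mem_insert_self _ _),
      Finset.erase_insert hp.2] at hmem
  · intro hpP
    have hp := hP p hpP
    have hp' := (mem_pairsAway z p).mp hp
    have hc : (insert z p).card = 3 := by rw [Finset.card_insert_of_notMem hp'.2, hp'.1]
    rw [mem_invMap z P _ hc, if_pos (Finset.mem_insert_self _ _), Finset.erase_insert hp'.2]
    exact ⟨hp, hpP⟩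

lemma left_inv {n : ℕ} (z : Fin n) (G : Finset (Finset (Fin n)))
    (hG : ∀ e ∈ G, e.card = 3) (hfree : IsLKFree n 4 {1, 3} G) :
    invMap z (fwdMap z G) = G := by
  ext t
  by_cases h3 : t.card = 3
  swap
  · have hL : t ∉ invMap z (fwdMap z G) := by
      intro h
      simp only [invMap, mem_filter, mem_powersetCard] at h
      exact h3 h.1.2
    have hR : t ∉ G := fun h => h3 (hG t h)
    simp [hL, hR]
  rw [mem_invMap z _ t h3]
  by_cases hzt : z ∈ t
  · rw [if_pos hzt]
    simp only [fwdMap, mem_filter, mem_pairsAway]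
    constructor
    · rintro ⟨_, h⟩
      rwa [Finset.insert_erase hzt] at h
    · intro h
      exact ⟨⟨by rw [Finset.card_erase_of_mem hzt, h3], Finset.notMem_erase _ _⟩,
        by rwa [Finset.insert_erase hzt]⟩
  · rw [if_neg hzt]
    have hfe : (t.powersetCard 2).filter (· ∈ fwdMap z G)
        = (t.powersetCard 2).filter (fun p => insert z p ∈ G) := by
      apply Finset.filter_congr
      intro p hp
      rw [mem_powersetCard] at hp
      have hzp : z ∉ p := fun h => hzt (hp.1 h)
      simp [fwdMap, mem_filter, mem_pairsAway, hp.2, hzp]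
    rw [hfe]
    have hS4 : (insert z t).card = 4 := by rw [Finset.card_insert_of_notMem hzt, h3]
    have hsum := (free_iff G hG).mp hfree (insert z t) hS4
    rw [sum_triples_insert z (insert z t) hS4 (Finset.mem_insert_self z t),
      Finset.erase_insert hzt, ← card_filter_zmod2, natCast_zmod2] at hsum
    constructor
    · intro hodd
      rw [if_pos hodd] at hsum
      by_contra hG'
      rw [if_neg hG'] at hsum
      simp at hsum
    · intro htG
      rw [if_pos htG] at hsum
      by_contra hodd
      rw [if_neg hodd] at hsum
      simp at hsum

end CountL13Aux

open CountL13Aux in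
/-- Lemma: for `n ≥ 4`, `f(n,3,4,{1,3}) = 2^(C(n-1,2))`. -/
theorem count_L13 (n : ℕ) (hn : 4 ≤ n) :
    numFree n 3 4 {1, 3} = 2 ^ Nat.choose (n - 1) 2 := by
  have hz0 : 0 < n := by omega
  set z : Fin n := ⟨0, hz0⟩
  rw [numFree]
  have hbij : ((rGraphs n 3).filter (IsLKFree n 4 {1, 3})).card
      = (pairsAway z).powerset.card := by
    apply Finset.card_nbij' (fwdMap z) (invMap z)
    · intro G _
      rw [Finset.mem_coe, Finset.mem_powerset]
      exact Finset.filter_subset _ _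
    · intro P hP
      rw [Finset.mem_coe, Finset.mem_powerset] at hP
      rw [Finset.mem_coe, Finset.mem_filter]
      have hG3 : ∀ e ∈ invMap z P, e.card = 3 := by
        intro e he
        simp only [invMap, mem_filter, mem_powersetCard] at he
        exact he.1.2
      refine ⟨(mem_rGraphs_iff _).mpr hG3, ?_⟩
      rw [free_iff _ hG3]
      intro S hS
      exact invMap_parity z P S hS
    · intro G hG
      rw [Finset.mem_coe, Finset.mem_filter] at hG
      exact left_inv z G ((mem_rGraphs_iff _).mp hG.1) hG.2
    · intro P hP
      rw [Finset.mem_coe, Finset.mem_powerset] at hP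
      exact right_inv z P (fun p hp => hP hp)
  rw [hbij, Finset.card_powerset]
  congr 1
  rw [pairsAway, Finset.card_powersetCard, Finset.card_erase_of_mem (Finset.mem_univ z),
    Finset.card_univ, Fintype.card_fin]
end

section
/- There exist a real constant c > 0 and a natural number n₀ such that for all n ≥ n₀: 2^{c·n³} ≤ f(n,3,4,{3,4}) ≤ 2^{n³} and 2^{c·n³} ≤ f(n,3,4,{4}) ≤ 2^{n³}; that is, the number of ({3,4},4)-free (equivalently, K₄³¯-free) 3-graphs on [n] and the number of ({4},4)-free (equivalently, K₄³-free) 3-graphs on [n] are both 2^{Θ(n³)}. -/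
open Finset

def Edges (n : ℕ) : Finset (Finset (Fin n)) :=
  (Finset.univ.powersetCard 3).filter (fun e => (e.image fun v => v.val % 3).card = 3)

lemma edges_card3 {n : ℕ} {e : Finset (Fin n)} (he : e ∈ Edges n) : e.card = 3 := by
  have := (Finset.mem_filter.1 he).1
  simpa [Finset.mem_powersetCard_univ] using this

lemma edges_injOn {n : ℕ} {e : Finset (Fin n)} (he : e ∈ Edges n) :
    Set.InjOn (fun v : Fin n => v.val % 3) e := by
  apply Finset.injOn_of_card_image_eq
  rw [(Finset.mem_filter.1 he).2, edges_card3 he]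

/-- key: at most two edges of `Edges n` inside any 4-set -/
lemma key {n : ℕ} {G : Finset (Finset (Fin n))} (hG : G ⊆ Edges n)
    {S : Finset (Fin n)} (hS : S.card = 4) :
    (G.filter (fun e => e ⊆ S)).card ≤ 2 := by
  obtain ⟨u, hu, v, hv, huv, heq⟩ :=
    Finset.exists_ne_map_eq_of_card_lt_of_maps_to (t := Finset.range 3)
      (by rw [hS, Finset.card_range]; norm_num)
      (fun a _ => Finset.mem_range.2 (Nat.mod_lt _ (by norm_num)) :
        ∀ a ∈ S, a.val % 3 ∈ Finset.range 3)
  have hsub : G.filter (fun e => e ⊆ S) ⊆ {S.erase u, S.erase v} := by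
    intro e he
    rw [Finset.mem_filter] at he
    obtain ⟨heG, heS⟩ := he
    have hE := hG heG
    have hcard := edges_card3 hE
    have hninj : ¬ (u ∈ e ∧ v ∈ e) := by
      rintro ⟨h1, h2⟩
      exact huv (edges_injOn hE h1 h2 heq)
    have herase : ∀ w : Fin n, w ∈ S → w ∉ e → e = S.erase w := by
      intro w hwS hwe
      apply Finset.eq_of_subset_of_card_le
      · intro x hx
        exact Finset.mem_erase.2 ⟨fun h => hwe (h ▸ hx), heS hx⟩
      · rw [Finset.card_erase_of_mem hwS, hS, hcard]
    rw [Finset.mem_insert, Finset.mem_singleton]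
    by_cases h1 : u ∈ e
    · right; exact herase v hv (fun h2 => hninj ⟨h1, h2⟩)
    · left; exact herase u hu h1
  calc (G.filter (fun e => e ⊆ S)).card ≤ ({S.erase u, S.erase v} : Finset _).card :=
        Finset.card_le_card hsub
    _ ≤ 2 := Finset.card_insert_le _ _ |>.trans (by simp)

lemma free_of_subset {n : ℕ} {G : Finset (Finset (Fin n))} (hG : G ⊆ Edges n)
    (L : Finset ℕ) (hL : ∀ x ∈ L, 3 ≤ x) : IsLKFree n 4 L G := by
  intro S hS hmem
  have := hL _ hmem
  have := key hG hS
  omega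

lemma lower {n : ℕ} (L : Finset ℕ) (hL : ∀ x ∈ L, 3 ≤ x) :
    2 ^ (Edges n).card ≤ numFree n 3 4 L := by
  rw [numFree, ← Finset.card_powerset]
  apply Finset.card_le_card
  intro G hG
  rw [Finset.mem_powerset] at hG
  refine Finset.mem_filter.2 ⟨?_, free_of_subset hG L hL⟩
  rw [rGraphs, Finset.mem_powerset]
  exact hG.trans (Finset.filter_subset _ _)

lemma edges_lower {n : ℕ} (hn : 3 ≤ n) : (n / 3) ^ 3 ≤ (Edges n).card := by
  set m := n / 3 with hm
  have h3m : 3 * m ≤ n := by omega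
  have hmpos : 1 ≤ m := Nat.one_le_div_iff (by norm_num) |>.2 hn
  -- injection from Fin m × Fin m × Fin m
  set f : Fin m × Fin m × Fin m → Finset (Fin n) := fun p =>
    {⟨3 * p.1.val, by omega⟩, ⟨3 * p.2.1.val + 1, by omega⟩, ⟨3 * p.2.2.val + 2, by omega⟩}
  have hmaps : ∀ p ∈ (Finset.univ : Finset (Fin m × Fin m × Fin m)), f p ∈ Edges n := by
    intro p _
    have hcard : (f p).card = 3 := by
      rw [show f p = {⟨3 * p.1.val, by omega⟩, ⟨3 * p.2.1.val + 1, by omega⟩,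
        ⟨3 * p.2.2.val + 2, by omega⟩} from rfl]
      rw [Finset.card_insert_of_notMem, Finset.card_insert_of_notMem] <;>
        simp [Fin.ext_iff] <;> omega
    refine Finset.mem_filter.2 ⟨Finset.mem_powersetCard_univ.2 hcard, ?_⟩
    rw [show f p = {⟨3 * p.1.val, by omega⟩, ⟨3 * p.2.1.val + 1, by omega⟩,
      ⟨3 * p.2.2.val + 2, by omega⟩} from rfl]
    rw [Finset.image_insert, Finset.image_insert, Finset.image_singleton]
    rw [Finset.card_insert_of_notMem, Finset.card_insert_of_notMem] <;>
      simp <;> omega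
  have hinj : Set.InjOn f (Finset.univ : Finset (Fin m × Fin m × Fin m)) := by
    intro p _ q _ hfe
    simp only [f] at hfe
    have h1 : (⟨3 * p.1.val, by omega⟩ : Fin n) ∈ ({⟨3 * q.1.val, by omega⟩,
        ⟨3 * q.2.1.val + 1, by omega⟩, ⟨3 * q.2.2.val + 2, by omega⟩} : Finset (Fin n)) := by
      rw [← hfe]; simp
    have h2 : (⟨3 * p.2.1.val + 1, by omega⟩ : Fin n) ∈ ({⟨3 * q.1.val, by omega⟩,
        ⟨3 * q.2.1.val + 1, by omega⟩, ⟨3 * q.2.2.val + 2, by omega⟩} : Finset (Fin n)) := by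
      rw [← hfe]; simp
    have h3 : (⟨3 * p.2.2.val + 2, by omega⟩ : Fin n) ∈ ({⟨3 * q.1.val, by omega⟩,
        ⟨3 * q.2.1.val + 1, by omega⟩, ⟨3 * q.2.2.val + 2, by omega⟩} : Finset (Fin n)) := by
      rw [← hfe]; simp
    simp only [Finset.mem_insert, Finset.mem_singleton, Fin.ext_iff] at h1 h2 h3
    have := p.1.isLt; have := p.2.1.isLt; have := p.2.2.isLt
    have e1 : p.1.val = q.1.val := by omega
    have e2 : p.2.1.val = q.2.1.val := by omega
    have e3 : p.2.2.val = q.2.2.val := by omega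
    exact Prod.ext (Fin.ext e1) (Prod.ext (Fin.ext e2) (Fin.ext e3))
  calc m ^ 3 = (Finset.univ : Finset (Fin m × Fin m × Fin m)).card := by
        simp [pow_succ]; ring
    _ ≤ (Edges n).card := Finset.card_le_card_of_injOn f hmaps hinj

lemma upperBound (n : ℕ) (L : Finset ℕ) : numFree n 3 4 L ≤ 2 ^ (n ^ 3) := by
  calc numFree n 3 4 L ≤ (rGraphs n 3).card := Finset.card_le_card (Finset.filter_subset _ _)
    _ = 2 ^ (Nat.choose n 3) := by
        rw [rGraphs, Finset.card_powerset, Finset.card_powersetCard, Finset.card_univ,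
          Fintype.card_fin]
    _ ≤ 2 ^ (n ^ 3) := Nat.pow_le_pow_right (by norm_num) (Nat.choose_le_pow n 3)

lemma main_bounds (n : ℕ) (hn : 6 ≤ n) (L : Finset ℕ) (hL : ∀ x ∈ L, 3 ≤ x) :
    (2 : ℝ) ^ ((1/216 : ℝ) * (n : ℝ) ^ 3) ≤ (numFree n 3 4 L : ℝ) ∧
      (numFree n 3 4 L : ℝ) ≤ (2 : ℝ) ^ ((n : ℝ) ^ 3) := by
  constructor
  · have hnat : 2 ^ ((n / 3) ^ 3) ≤ numFree n 3 4 L :=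
      le_trans (Nat.pow_le_pow_right (by norm_num) (edges_lower (by omega))) (lower L hL)
    have h1 : n ≤ 6 * (n / 3) := by omega
    have h1r : (n : ℝ) ≤ 6 * ((n / 3 : ℕ) : ℝ) := by
      have := (Nat.cast_le (α := ℝ)).2 h1
      push_cast at this
      linarith
    have h2 : (1/216 : ℝ) * (n : ℝ) ^ 3 ≤ (((n / 3) ^ 3 : ℕ) : ℝ) := by
      have h3 : (n : ℝ) ^ 3 ≤ (6 * ((n / 3 : ℕ) : ℝ)) ^ 3 :=
        pow_le_pow_left₀ (by positivity) h1r 3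
      push_cast
      nlinarith [h3]
    calc (2 : ℝ) ^ ((1/216 : ℝ) * (n : ℝ) ^ 3) ≤ (2 : ℝ) ^ ((((n / 3) ^ 3 : ℕ) : ℝ)) :=
          Real.rpow_le_rpow_left_iff (by norm_num) |>.2 h2
      _ = ((2 ^ ((n / 3) ^ 3) : ℕ) : ℝ) := by
          rw [Real.rpow_natCast]; push_cast; ring
      _ ≤ (numFree n 3 4 L : ℝ) := Nat.cast_le.2 hnat
  · calc (numFree n 3 4 L : ℝ) ≤ ((2 ^ (n ^ 3) : ℕ) : ℝ) := Nat.cast_le.2 (upperBound n L)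
      _ = (2 : ℝ) ^ ((n : ℝ) ^ 3) := by
          rw [show ((n : ℝ))^3 = (((n^3 : ℕ) : ℕ) : ℝ) by push_cast; ring, Real.rpow_natCast]
          push_cast; ring

/-- Claim: `f(n,3,4,{3,4})` (the number of `K₄³⁻`-free 3-graphs) and `f(n,3,4,{4})`
(the number of `K₄³`-free 3-graphs) are both `2^(Θ(n³))`, with upper bound `2^(n³)`. -/
theorem count_L34_L4 :
    ∃ c : ℝ, 0 < c ∧ ∃ n₀ : ℕ, ∀ n : ℕ, n₀ ≤ n →
      ((2 : ℝ) ^ (c * (n : ℝ) ^ 3) ≤ (numFree n 3 4 {3, 4} : ℝ) ∧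
        (numFree n 3 4 {3, 4} : ℝ) ≤ (2 : ℝ) ^ ((n : ℝ) ^ 3)) ∧
      ((2 : ℝ) ^ (c * (n : ℝ) ^ 3) ≤ (numFree n 3 4 {4} : ℝ) ∧
        (numFree n 3 4 {4} : ℝ) ≤ (2 : ℝ) ^ ((n : ℝ) ^ 3)) := by
  refine ⟨1/216, by norm_num, 6, fun n hn => ?_⟩
  exact ⟨main_bounds n hn {3, 4} (by intro x hx; fin_cases hx <;> norm_num),
    main_bounds n hn {4} (by intro x hx; fin_cases hx <;> norm_num)⟩
end

section
/- For every n ≥ 4: f(n,3,4,{1,2,3}) = 2; the only ({1,2,3},4)-free 3-graphs on [n] are the complete 3-graph and the empty 3-graph. -/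
open Finset

lemma free_step (n : ℕ) (G : Finset (Finset (Fin n)))
    (hG : ∀ e ∈ G, e.card = 3)
    (hfree : IsLKFree n 4 {1, 2, 3} G)
    {e f : Finset (Fin n)} (he : e ∈ G) (hf : f.card = 3)
    (hcard : (e ∪ f).card = 4) : f ∈ G := by
  set S := e ∪ f with hSdef
  have h := hfree S hcard
  have hsub : G.filter (fun x => x ⊆ S) ⊆ S.powersetCard 3 := by
    intro x hx
    simp only [mem_filter] at hx
    exact mem_powersetCard.mpr ⟨hx.2, hG x hx.1⟩
  have hT : (S.powersetCard 3).card = 4 := by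
    rw [card_powersetCard, hcard]; rfl
  have hle : (G.filter (fun x => x ⊆ S)).card ≤ 4 := hT ▸ card_le_card hsub
  have hne : e ∈ G.filter (fun x => x ⊆ S) :=
    mem_filter.mpr ⟨he, subset_union_left⟩
  have hpos : 1 ≤ (G.filter (fun x => x ⊆ S)).card := card_pos.mpr ⟨e, hne⟩
  simp only [mem_insert, mem_singleton] at h
  push_neg at h
  have hcard4 : (G.filter (fun x => x ⊆ S)).card = 4 := by omega
  have heq := eq_of_subset_of_card_le hsub (by omega)
  have hfmem : f ∈ S.powersetCard 3 :=
    mem_powersetCard.mpr ⟨subset_union_right, hf⟩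
  rw [← heq] at hfmem
  exact (mem_filter.mp hfmem).1

lemma free_connect (n : ℕ) (G : Finset (Finset (Fin n)))
    (hG : ∀ e ∈ G, e.card = 3) (hfree : IsLKFree n 4 {1, 2, 3} G) :
    ∀ k (e f : Finset (Fin n)), (e \ f).card = k → e ∈ G → f.card = 3 → f ∈ G := by
  intro k
  induction k with
  | zero =>
    intro e f hd he hf
    have hsub : e ⊆ f := sdiff_eq_empty_iff_subset.mp (card_eq_zero.mp hd)
    have : e = f := eq_of_subset_of_card_le hsub (by rw [hG e he, hf])
    rwa [this] at he
  | succ k ih =>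
    intro e f hd he hf
    have he3 : e.card = 3 := hG e he
    have hfe : (f \ e).card = k + 1 := by
      have h1 := card_sdiff_add_card_inter e f
      have h2 := card_sdiff_add_card_inter f e
      rw [inter_comm] at h2
      omega
    obtain ⟨a, ha⟩ : (e \ f).Nonempty := by rw [← card_pos, hd]; omega
    obtain ⟨b, hb⟩ : (f \ e).Nonempty := by rw [← card_pos, hfe]; omega
    have hae : a ∈ e := (mem_sdiff.mp ha).1
    have haf : a ∉ f := (mem_sdiff.mp ha).2
    have hbf : b ∈ f := (mem_sdiff.mp hb).1
    have hbe : b ∉ e := (mem_sdiff.mp hb).2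
    set e' := insert b (e.erase a) with he'def
    have hbne : b ∉ e.erase a := fun h => hbe (mem_of_mem_erase h)
    have he'3 : e'.card = 3 := by
      rw [he'def, card_insert_of_notMem hbne, card_erase_of_mem hae, he3]
    have hunion : (e ∪ e').card = 4 := by
      have : e ∪ e' = insert b e := by
        rw [he'def]
        ext x
        simp only [mem_union, mem_insert, mem_erase]
        constructor
        · tauto
        · rintro (h | h)
          · tauto
          · by_cases hx : x = a <;> tauto
      rw [this, card_insert_of_notMem hbe, he3]
    have he' : e' ∈ G := free_step n G hG hfree he he'3 hunion
    have hd' : (e' \ f).card = k := by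
      have h1 : e' \ f = (e \ f).erase a := by
        rw [he'def, insert_sdiff_of_mem _ hbf, erase_sdiff_comm]
      rw [h1, card_erase_of_mem ha, hd]; rfl
    exact ih e' f hd' he' hf

lemma complete_free (n : ℕ) :
    IsLKFree n 4 {1, 2, 3} ((Finset.univ : Finset (Fin n)).powersetCard 3) := by
  intro S hS
  have heq : ((Finset.univ : Finset (Fin n)).powersetCard 3).filter (fun e => e ⊆ S) =
      S.powersetCard 3 := by
    ext t
    simp only [mem_filter, mem_powersetCard, subset_univ, true_and]
    tauto
  rw [heq, card_powersetCard, hS]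
  decide

lemma empty_free (n : ℕ) :
    IsLKFree n 4 {1, 2, 3} (∅ : Finset (Finset (Fin n))) := by
  intro S hS
  simp

/-- Claim: for `n ≥ 4`, `f(n,3,4,{1,2,3}) = 2`; the only `({1,2,3},4)`-free 3-graphs
on `[n]` are the empty and the complete 3-graph. -/
theorem count_L123 (n : ℕ) (hn : 4 ≤ n) :
    numFree n 3 4 {1, 2, 3} = 2 ∧
    ∀ G ∈ rGraphs n 3,
      (IsLKFree n 4 {1, 2, 3} G ↔
        (G = ∅ ∨ G = (Finset.univ : Finset (Fin n)).powersetCard 3)) := by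
  have hiff : ∀ G ∈ rGraphs n 3,
      (IsLKFree n 4 {1, 2, 3} G ↔
        (G = ∅ ∨ G = (Finset.univ : Finset (Fin n)).powersetCard 3)) := by
    intro G hGmem
    have hGsub : G ⊆ (Finset.univ : Finset (Fin n)).powersetCard 3 :=
      mem_powerset.mp hGmem
    have hG : ∀ e ∈ G, e.card = 3 := fun e he =>
      (mem_powersetCard.mp (hGsub he)).2
    constructor
    · intro hfree
      by_cases hGe : G = ∅
      · exact Or.inl hGe
      · right
        obtain ⟨e, he⟩ := nonempty_of_ne_empty hGe
        apply Finset.Subset.antisymm hGsub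
        intro f hfmem
        have hf3 : f.card = 3 := (mem_powersetCard.mp hfmem).2
        exact free_connect n G hG hfree (e \ f).card e f rfl he hf3
    · rintro (rfl | rfl)
      · exact empty_free n
      · exact complete_free n
  refine ⟨?_, hiff⟩
  have hfilter : (rGraphs n 3).filter (IsLKFree n 4 {1, 2, 3}) =
      {∅, (Finset.univ : Finset (Fin n)).powersetCard 3} := by
    ext G
    simp only [mem_filter, mem_insert, mem_singleton]
    constructor
    · rintro ⟨hmem, hfree⟩
      exact (hiff G hmem).mp hfree
    · rintro (rfl | rfl)
      · exact ⟨mem_powerset.mpr (empty_subset _), empty_free n⟩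
      · exact ⟨mem_powerset.mpr (Finset.Subset.refl _), complete_free n⟩
  rw [numFree, hfilter]
  have hne : (∅ : Finset (Finset (Fin n))) ≠
      (Finset.univ : Finset (Fin n)).powersetCard 3 := by
    obtain ⟨t, _, ht⟩ := Finset.exists_subset_card_eq (show 3 ≤ (Finset.univ : Finset (Fin n)).card from
      (by rw [card_univ, Fintype.card_fin]; omega))
    intro h
    have : t ∈ (Finset.univ : Finset (Fin n)).powersetCard 3 :=
      mem_powersetCard.mpr ⟨subset_univ t, ht⟩
    rw [← h] at this
    exact notMem_empty t this
  rw [card_insert_of_notMem (by simpa using hne), card_singleton]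
end

section
/- For every n ≥ 5: f(n,3,4,{0,2,3}) = n + 1; the ({0,2,3},4)-free 3-graphs on [n] are exactly the complete 3-graph on [n] and, for each vertex v ∈ [n], the 3-graph consisting of all 3-element subsets of [n] \ {v}. -/
open Finset

section helpers
variable {α : Type*} [DecidableEq α]

lemma erase4a {a b c d : α} (hab : a≠b) (hac : a≠c) (had : a≠d) :
    ({a,b,c,d} : Finset α).erase a = {b,c,d} :=
  erase_insert (by simp [hab, hac, had])

lemma erase4b {a b c d : α} (hab : a≠b) (hbc : b≠c) (hbd : b≠d) :
    ({a,b,c,d} : Finset α).erase b = {a,c,d} := by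
  rw [show ({a,b,c,d} : Finset α) = insert b {a,c,d} by rw [Finset.insert_comm]]
  exact erase_insert (by simp [hab.symm, hbc, hbd])

lemma erase4c {a b c d : α} (hac : a≠c) (hbc : b≠c) (hcd : c≠d) :
    ({a,b,c,d} : Finset α).erase c = {a,b,d} := by
  rw [show ({a,b,c,d} : Finset α) = insert c {a,b,d} by
    rw [show ({b,c,d}:Finset α) = insert c {b,d} from Finset.insert_comm b c {d},
        Finset.insert_comm a c]]
  exact erase_insert (by simp [hac.symm, hbc.symm, hcd])

lemma erase4d {a b c d : α} (had : a≠d) (hbd : b≠d) (hcd : c≠d) :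
    ({a,b,c,d} : Finset α).erase d = {a,b,c} := by
  rw [show ({a,b,c,d} : Finset α) = insert d {a,b,c} by
    rw [show ({c,d}:Finset α) = insert d {c} from pair_comm c d,
        show ({b,d,c}:Finset α) = insert d {b,c} from Finset.insert_comm b d {c},
        Finset.insert_comm a d]]
  exact erase_insert (by simp [had.symm, hbd.symm, hcd.symm])

lemma ne_of_memdiff {s t : Finset α} {x} (h1 : x ∈ s) (h2 : x ∉ t) :
    s ≠ t := fun h => h2 (h ▸ h1)

end helpers
lemma quad' {n : ℕ} {G : Finset (Finset (Fin n))}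
    (hE : ∀ e ∈ G, e.card = 3) (hfree : IsLKFree n 4 {0,2,3} G)
    {a b c d : Fin n} (hab : a≠b) (hac : a≠c) (had : a≠d) (hbc : b≠c) (hbd : b≠d) (hcd : c≠d) :
    (({a,b,c}:Finset (Fin n)) ∈ G ∧ ({a,b,d}:Finset (Fin n)) ∈ G ∧ ({a,c,d}:Finset (Fin n)) ∈ G ∧ ({b,c,d}:Finset (Fin n)) ∈ G) ∨
    (({a,b,c}:Finset (Fin n)) ∈ G ∧ ({a,b,d}:Finset (Fin n)) ∉ G ∧ ({a,c,d}:Finset (Fin n)) ∉ G ∧ ({b,c,d}:Finset (Fin n)) ∉ G) ∨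
    (({a,b,c}:Finset (Fin n)) ∉ G ∧ ({a,b,d}:Finset (Fin n)) ∈ G ∧ ({a,c,d}:Finset (Fin n)) ∉ G ∧ ({b,c,d}:Finset (Fin n)) ∉ G) ∨
    (({a,b,c}:Finset (Fin n)) ∉ G ∧ ({a,b,d}:Finset (Fin n)) ∉ G ∧ ({a,c,d}:Finset (Fin n)) ∈ G ∧ ({b,c,d}:Finset (Fin n)) ∉ G) ∨
    (({a,b,c}:Finset (Fin n)) ∉ G ∧ ({a,b,d}:Finset (Fin n)) ∉ G ∧ ({a,c,d}:Finset (Fin n)) ∉ G ∧ ({b,c,d}:Finset (Fin n)) ∈ G) := by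
  have hS : ({a,b,c,d} : Finset (Fin n)).card = 4 := by
    simp [card_insert_of_notMem, *]
  have hfilter : G.filter (fun e => e ⊆ ({a,b,c,d} : Finset (Fin n))) =
      ({({a,b,c}:Finset (Fin n)), {a,b,d}, {a,c,d}, {b,c,d}} : Finset (Finset (Fin n))).filter (· ∈ G) := by
    ext e
    simp only [mem_filter, mem_insert, mem_singleton]
    constructor
    · rintro ⟨heG, heS⟩
      refine ⟨?_, heG⟩
      have hce : e.card = 3 := hE e heG
      have h1 : (({a,b,c,d} : Finset (Fin n)) \ e).card = 1 := by
        rw [card_sdiff_of_subset heS, hS, hce]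
      obtain ⟨x, hx⟩ := card_eq_one.mp h1
      have hxS : x ∈ ({a,b,c,d} : Finset (Fin n)) := by
        have : x ∈ ({a,b,c,d} : Finset (Fin n)) \ e := hx ▸ mem_singleton_self x
        exact (mem_sdiff.mp this).1
      have he : e = ({a,b,c,d} : Finset (Fin n)).erase x := by
        rw [← sdiff_singleton_eq_erase, ← hx, sdiff_sdiff_right_self]
        simp [inf_eq_inter, inter_eq_right.mpr heS]
      simp only [mem_insert, mem_singleton] at hxS
      rcases hxS with h | h | h | h <;> rw [h] at he
      · rw [erase4a hab hac had] at he; tauto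
      · rw [erase4b hab hbc hbd] at he; tauto
      · rw [erase4c hac hbc hcd] at he; tauto
      · rw [erase4d had hbd hcd] at he; tauto
    · rintro ⟨h, heG⟩
      refine ⟨heG, ?_⟩
      rcases h with rfl | rfl | rfl | rfl <;> intro y hy <;>
        simp only [mem_insert, mem_singleton] at hy ⊢ <;> tauto
  have hnot := hfree ({a,b,c,d} : Finset (Fin n)) hS
  rw [hfilter] at hnot
  have h12 : ({a,b,c}:Finset (Fin n)) ≠ {a,b,d} :=
    ne_of_memdiff (x := c) (by simp) (by simp [hac.symm, hbc.symm, hcd])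
  have h13 : ({a,b,c}:Finset (Fin n)) ≠ {a,c,d} :=
    ne_of_memdiff (x := b) (by simp) (by simp [hab.symm, hbc, hbd])
  have h14 : ({a,b,c}:Finset (Fin n)) ≠ {b,c,d} :=
    ne_of_memdiff (x := a) (by simp) (by simp [hab, hac, had])
  have h23 : ({a,b,d}:Finset (Fin n)) ≠ {a,c,d} :=
    ne_of_memdiff (x := b) (by simp) (by simp [hab.symm, hbc, hbd])
  have h24 : ({a,b,d}:Finset (Fin n)) ≠ {b,c,d} :=
    ne_of_memdiff (x := a) (by simp) (by simp [hab, hac, had])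
  have h34 : ({a,c,d}:Finset (Fin n)) ≠ {b,c,d} :=
    ne_of_memdiff (x := a) (by simp) (by simp [hab, hac, had])
  have hsum : (filter (· ∈ G) ({({a,b,c}:Finset (Fin n)), {a,b,d}, {a,c,d}, {b,c,d}} : Finset (Finset (Fin n)))).card =
      (if ({a,b,c}:Finset (Fin n)) ∈ G then 1 else 0) + ((if ({a,b,d}:Finset (Fin n)) ∈ G then 1 else 0)
        + ((if ({a,c,d}:Finset (Fin n)) ∈ G then 1 else 0) + (if ({b,c,d}:Finset (Fin n)) ∈ G then 1 else 0))) := by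
    rw [card_filter, sum_insert (by simp [h12, h13, h14]), sum_insert (by simp [h23, h24]),
      sum_insert (by simp [h34]), sum_singleton]
  rw [hsum] at hnot
  simp only [mem_insert, mem_singleton, not_or] at hnot
  by_cases m1 : ({a,b,c}:Finset (Fin n)) ∈ G <;>
  by_cases m2 : ({a,b,d}:Finset (Fin n)) ∈ G <;>
  by_cases m3 : ({a,c,d}:Finset (Fin n)) ∈ G <;>
  by_cases m4 : ({b,c,d}:Finset (Fin n)) ∈ G <;>
  simp [m1, m2, m3, m4] at hnot ⊢
lemma recon2 {α : Type*} [DecidableEq α] {t s : Finset α} {b : α} (hb : b ∈ t)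
    (h : t.erase b = s) : t = insert b s := by rw [← h, insert_erase hb]

lemma recon3 {α : Type*} [DecidableEq α] {t : Finset α} {a b y : α} (ha : a ∈ t)
    (hb : b ∈ t.erase a) (h : (t.erase a).erase b = {y}) : t = {a, b, y} := by
  show t = insert a (insert b ({y} : Finset α))
  rw [← h, insert_erase hb, insert_erase ha]

lemma bad {n : ℕ} {G : Finset (Finset (Fin n))}
    (hE : ∀ e ∈ G, e.card = 3) (hfree : IsLKFree n 4 {0,2,3} G)
    {a b c d e : Fin n} (hab : a≠b) (hac : a≠c) (had : a≠d) (hae : a≠e) (hbc : b≠c)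
    (hbd : b≠d) (hbe : b≠e) (hcd : c≠d) (hce : c≠e) (hde : d≠e)
    (h1 : ({a,b,c}:Finset (Fin n)) ∉ G) (h2 : ({b,c,d}:Finset (Fin n)) ∈ G)
    (h3 : ({a,c,e}:Finset (Fin n)) ∈ G) : False := by
  obtain ⟨habd, hacd⟩ : ({a,b,d}:Finset (Fin n)) ∉ G ∧ ({a,c,d}:Finset (Fin n)) ∉ G := by
    have := quad' hE hfree hab hac had hbc hbd hcd; tauto
  obtain ⟨habe, hbce⟩ : ({a,b,e}:Finset (Fin n)) ∉ G ∧ ({b,c,e}:Finset (Fin n)) ∉ G := by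
    have := quad' hE hfree hab hac hae hbc hbe hce; tauto
  obtain ⟨hbde, hcde⟩ : ({b,d,e}:Finset (Fin n)) ∉ G ∧ ({c,d,e}:Finset (Fin n)) ∉ G := by
    have := quad' hE hfree hbc hbd hbe hcd hce hde; tauto
  have hade : ({a,d,e}:Finset (Fin n)) ∉ G := by
    have := quad' hE hfree hac had hae hcd hce hde; tauto
  have := quad' hE hfree hab had hae hbd hbe hde; tauto

lemma core {n : ℕ} {G : Finset (Finset (Fin n))}
    (hE : ∀ e ∈ G, e.card = 3) (hfree : IsLKFree n 4 {0,2,3} G)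
    {a b c d : Fin n} (hab : a≠b) (hac : a≠c) (had : a≠d) (hbc : b≠c) (hbd : b≠d) (hcd : c≠d)
    (h1 : ({a,b,c}:Finset (Fin n)) ∉ G) (h2 : ({b,c,d}:Finset (Fin n)) ∈ G) :
    G = ((univ : Finset (Fin n)).erase a).powersetCard 3 := by
  have peq1 : ({a,c,b}:Finset (Fin n)) = {a,b,c} := by rw [pair_comm c b]
  have peq2 : ({c,b,d}:Finset (Fin n)) = {b,c,d} := Finset.insert_comm c b {d}
  have h3 : ∀ x : Fin n, x ≠ a → x ≠ b → x ≠ c →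
      (({b,c,x}:Finset (Fin n)) ∈ G ∧ ({a,b,x}:Finset (Fin n)) ∉ G ∧
        ({a,c,x}:Finset (Fin n)) ∉ G) := by
    intro x hxa hxb hxc
    obtain ⟨habd, hacd⟩ : ({a,b,d}:Finset (Fin n)) ∉ G ∧ ({a,c,d}:Finset (Fin n)) ∉ G := by
      have := quad' hE hfree hab hac had hbc hbd hcd; tauto
    by_cases hxd : x = d
    · subst hxd; exact ⟨h2, habd, hacd⟩
    · have Q := quad' hE hfree hab hac hxa.symm hbc hxb.symm hxc.symm
      rcases Q with ⟨q1,_⟩|⟨q1,_⟩|⟨_,q2,_,_⟩|⟨_,_,q3,_⟩|⟨_,q2,q3,q4⟩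
      · exact absurd q1 h1
      · exact absurd q1 h1
      · exact (bad hE hfree hac hab had hxa.symm hbc.symm hcd hxc.symm hbd hxb.symm
          (Ne.symm hxd) (by rw [peq1]; exact h1) (by rw [peq2]; exact h2) q2).elim
      · exact (bad hE hfree hab hac had hxa.symm hbc hbd hxb.symm hcd hxc.symm
          (Ne.symm hxd) h1 h2 q3).elim
      · exact ⟨q4, q2, q3⟩
  have hbc2 : ∀ x y : Fin n, x ≠ a → x ≠ b → x ≠ c → y ≠ a → y ≠ b → y ≠ c → x ≠ y →
      (({b,x,y}:Finset (Fin n)) ∈ G ∧ ({c,x,y}:Finset (Fin n)) ∈ G) := by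
    intro x y hxa hxb hxc hya hyb hyc hxy
    have t1 := (h3 x hxa hxb hxc).1
    have t2 := (h3 y hya hyb hyc).1
    have Q := quad' hE hfree hbc hxb.symm hyb.symm hxc.symm hyc.symm hxy
    tauto
  have haxy : ∀ x y : Fin n, x ≠ a → x ≠ b → x ≠ c → y ≠ a → y ≠ b → y ≠ c → x ≠ y →
      ({a,x,y}:Finset (Fin n)) ∉ G := by
    intro x y hxa hxb hxc hya hyb hyc hxy
    have n1 := (h3 x hxa hxb hxc).2.1
    have n2 := (h3 y hya hyb hyc).2.1
    have t4 := (hbc2 x y hxa hxb hxc hya hyb hyc hxy).1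
    have Q := quad' hE hfree hab hxa.symm hya.symm hxb.symm hyb.symm hxy
    tauto
  have hxyz : ∀ x y z : Fin n, x ≠ a → x ≠ b → x ≠ c → y ≠ a → y ≠ b → y ≠ c →
      z ≠ a → z ≠ b → z ≠ c → x ≠ y → x ≠ z → y ≠ z → ({x,y,z}:Finset (Fin n)) ∈ G := by
    intro x y z hxa hxb hxc hya hyb hyc hza hzb hzc hxy hxz hyz
    have t1 := (hbc2 x y hxa hxb hxc hya hyb hyc hxy).1
    have t2 := (hbc2 x z hxa hxb hxc hza hzb hzc hxz).1
    have Q := quad' hE hfree hxb.symm hyb.symm hzb.symm hxy hxz hyz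
    tauto
  ext t
  simp only [mem_powersetCard, subset_erase, subset_univ, true_and]
  constructor
  · intro ht
    refine ⟨?_, hE t ht⟩
    intro hat
    by_cases hbt : b ∈ t <;> by_cases hct : c ∈ t
    · have hsub : ({a,b,c}:Finset (Fin n)) ⊆ t := by
        simp [insert_subset_iff, hat, hbt, hct]
      have hle : t.card ≤ ({a,b,c}:Finset (Fin n)).card := by
        rw [hE t ht]
        have : ({a,b,c}:Finset (Fin n)).card = 3 := by
          simp [card_insert_of_notMem, hab, hac, hbc]
        omega
      exact h1 ((eq_of_subset_of_card_le hsub hle) ▸ ht)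
    · have hb' : b ∈ t.erase a := mem_erase.mpr ⟨hab.symm, hbt⟩
      have hc1 : ((t.erase a).erase b).card = 1 := by
        rw [card_erase_of_mem hb', card_erase_of_mem hat, hE t ht]
      obtain ⟨y, hy⟩ := card_eq_one.mp hc1
      have hy' : y ∈ (t.erase a).erase b := hy ▸ mem_singleton_self y
      have hyt : y ∈ t := mem_of_mem_erase (mem_of_mem_erase hy')
      have hya : y ≠ a := (mem_erase.mp (mem_of_mem_erase hy')).1
      have hyb : y ≠ b := (mem_erase.mp hy').1
      have hyc : y ≠ c := fun h => hct (h ▸ hyt)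
      exact (h3 y hya hyb hyc).2.1 ((recon3 hat hb' hy) ▸ ht)
    · have hc' : c ∈ t.erase a := mem_erase.mpr ⟨hac.symm, hct⟩
      have hc1 : ((t.erase a).erase c).card = 1 := by
        rw [card_erase_of_mem hc', card_erase_of_mem hat, hE t ht]
      obtain ⟨y, hy⟩ := card_eq_one.mp hc1
      have hy' : y ∈ (t.erase a).erase c := hy ▸ mem_singleton_self y
      have hyt : y ∈ t := mem_of_mem_erase (mem_of_mem_erase hy')
      have hya : y ≠ a := (mem_erase.mp (mem_of_mem_erase hy')).1
      have hyc : y ≠ c := (mem_erase.mp hy').1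
      have hyb : y ≠ b := fun h => hbt (h ▸ hyt)
      exact (h3 y hya hyb hyc).2.2 ((recon3 hat hc' hy) ▸ ht)
    · have hc2 : (t.erase a).card = 2 := by rw [card_erase_of_mem hat, hE t ht]
      obtain ⟨x, y, hxy, hxyeq⟩ := card_eq_two.mp hc2
      have hx' : x ∈ t.erase a := hxyeq ▸ (by simp)
      have hy' : y ∈ t.erase a := hxyeq ▸ (by simp)
      have hxt : x ∈ t := mem_of_mem_erase hx'
      have hyt : y ∈ t := mem_of_mem_erase hy'
      have hteq : t = {a, x, y} := recon2 hat hxyeq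
      exact haxy x y (mem_erase.mp hx').1 (fun h => hbt (h ▸ hxt)) (fun h => hct (h ▸ hxt))
        (mem_erase.mp hy').1 (fun h => hbt (h ▸ hyt)) (fun h => hct (h ▸ hyt)) hxy
        (hteq ▸ ht)
  · rintro ⟨hat, hct3⟩
    have hat' : a ∉ t := hat
    by_cases hbt : b ∈ t <;> by_cases hct : c ∈ t
    · have hc' : c ∈ t.erase b := mem_erase.mpr ⟨hbc.symm, hct⟩
      have hc1 : ((t.erase b).erase c).card = 1 := by
        rw [card_erase_of_mem hc', card_erase_of_mem hbt, hct3]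
      obtain ⟨z, hz⟩ := card_eq_one.mp hc1
      have hz' : z ∈ (t.erase b).erase c := hz ▸ mem_singleton_self z
      have hzt : z ∈ t := mem_of_mem_erase (mem_of_mem_erase hz')
      have hza : z ≠ a := fun h => hat' (h ▸ hzt)
      have hzb : z ≠ b := (mem_erase.mp (mem_of_mem_erase hz')).1
      have hzc : z ≠ c := (mem_erase.mp hz').1
      rw [recon3 hbt hc' hz]
      exact (h3 z hza hzb hzc).1
    · have hc2 : (t.erase b).card = 2 := by rw [card_erase_of_mem hbt, hct3]
      obtain ⟨x, y, hxy, hxyeq⟩ := card_eq_two.mp hc2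
      have hx' : x ∈ t.erase b := hxyeq ▸ (by simp)
      have hy' : y ∈ t.erase b := hxyeq ▸ (by simp)
      have hxt : x ∈ t := mem_of_mem_erase hx'
      have hyt : y ∈ t := mem_of_mem_erase hy'
      rw [recon2 hbt hxyeq]
      exact (hbc2 x y (fun h => hat' (h ▸ hxt)) (mem_erase.mp hx').1
        (fun h => hct (h ▸ hxt)) (fun h => hat' (h ▸ hyt)) (mem_erase.mp hy').1
        (fun h => hct (h ▸ hyt)) hxy).1
    · have hc2 : (t.erase c).card = 2 := by rw [card_erase_of_mem hct, hct3]
      obtain ⟨x, y, hxy, hxyeq⟩ := card_eq_two.mp hc2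
      have hx' : x ∈ t.erase c := hxyeq ▸ (by simp)
      have hy' : y ∈ t.erase c := hxyeq ▸ (by simp)
      have hxt : x ∈ t := mem_of_mem_erase hx'
      have hyt : y ∈ t := mem_of_mem_erase hy'
      rw [recon2 hct hxyeq]
      exact (hbc2 x y (fun h => hat' (h ▸ hxt)) (fun h => hbt (h ▸ hxt))
        (mem_erase.mp hx').1 (fun h => hat' (h ▸ hyt)) (fun h => hbt (h ▸ hyt))
        (mem_erase.mp hy').1 hxy).2
    · obtain ⟨x, y, z, hxy, hxz, hyz, hteq⟩ := card_eq_three.mp hct3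
      have hxt : x ∈ t := hteq ▸ (by simp)
      have hyt : y ∈ t := hteq ▸ (by simp)
      have hzt : z ∈ t := hteq ▸ (by simp)
      rw [hteq]
      exact hxyz x y z (fun h => hat' (h ▸ hxt)) (fun h => hbt (h ▸ hxt))
        (fun h => hct (h ▸ hxt)) (fun h => hat' (h ▸ hyt)) (fun h => hbt (h ▸ hyt))
        (fun h => hct (h ▸ hyt)) (fun h => hat' (h ▸ hzt)) (fun h => hbt (h ▸ hzt))
        (fun h => hct (h ▸ hzt)) hxy hxz hyz
lemma charac {n : ℕ} (hn : 5 ≤ n) {G : Finset (Finset (Fin n))}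
    (hE : ∀ e ∈ G, e.card = 3) (hfree : IsLKFree n 4 {0,2,3} G) :
    G = (univ : Finset (Fin n)).powersetCard 3 ∨
      ∃ v : Fin n, G = ((univ : Finset (Fin n)).erase v).powersetCard 3 := by
  by_cases hG : (univ : Finset (Fin n)).powersetCard 3 ⊆ G
  · left
    refine Subset.antisymm (fun e he => ?_) hG
    exact mem_powersetCard.mpr ⟨subset_univ e, hE e he⟩
  · right
    obtain ⟨t, htP, htG⟩ := not_subset.mp hG
    obtain ⟨_, htc⟩ := mem_powersetCard.mp htP
    obtain ⟨a, b, c, hab, hac, hbc, rfl⟩ := card_eq_three.mp htc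
    have hcard3 : ({a,b,c}:Finset (Fin n)).card = 3 := htc
    have hss : ({a,b,c}:Finset (Fin n)) ⊂ (univ : Finset (Fin n)) := by
      refine Finset.ssubset_univ_iff.mpr ?_
      intro h
      have := congrArg Finset.card h
      rw [hcard3, card_univ, Fintype.card_fin] at this
      omega
    obtain ⟨d, _, hd⟩ := exists_of_ssubset hss
    simp only [mem_insert, mem_singleton, not_or] at hd
    obtain ⟨hda, hdb, hdc⟩ := hd
    have had : a ≠ d := Ne.symm hda
    have hbd : b ≠ d := Ne.symm hdb
    have hcd : c ≠ d := Ne.symm hdc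
    have Q := quad' hE hfree hab hac had hbc hbd hcd
    rcases Q with ⟨q1,_⟩|⟨q1,_⟩|⟨_,q2,_,_⟩|⟨_,_,q3,_⟩|⟨_,_,_,q4⟩
    · exact absurd q1 htG
    · exact absurd q1 htG
    · -- {a,b,d} ∈ G : core with (c,a,b,d)
      refine ⟨c, core hE hfree hac.symm hbc.symm hcd hab had hbd ?_ q2⟩
      intro h; apply htG
      have : ({c,a,b}:Finset (Fin n)) = {a,b,c} := by
        rw [Finset.insert_comm c a, pair_comm c b]
      rwa [this] at h
    · -- {a,c,d} ∈ G : core with (b,a,c,d)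
      refine ⟨b, core hE hfree hab.symm hbc hbd hac had hcd ?_ q3⟩
      intro h; apply htG
      have : ({b,a,c}:Finset (Fin n)) = {a,b,c} := Finset.insert_comm b a {c}
      rwa [this] at h
    · exact ⟨a, core hE hfree hab hac had hbc hbd hcd htG q4⟩

lemma free_complete {n : ℕ} :
    IsLKFree n 4 {0,2,3} ((univ : Finset (Fin n)).powersetCard 3) := by
  intro S hS
  have : ((univ : Finset (Fin n)).powersetCard 3).filter (fun e => e ⊆ S) =
      S.powersetCard 3 := by
    ext e; simp only [mem_filter, mem_powersetCard, subset_univ, true_and]; tauto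
  rw [this, card_powersetCard, hS]
  decide

lemma free_erase {n : ℕ} (v : Fin n) :
    IsLKFree n 4 {0,2,3} (((univ : Finset (Fin n)).erase v).powersetCard 3) := by
  intro S hS
  have : (((univ : Finset (Fin n)).erase v).powersetCard 3).filter (fun e => e ⊆ S) =
      (S.erase v).powersetCard 3 := by
    ext e
    simp only [mem_filter, mem_powersetCard, subset_erase, subset_univ, true_and]
    tauto
  rw [this, card_powersetCard]
  by_cases hv : v ∈ S
  · rw [card_erase_of_mem hv, hS]; decide
  · rw [erase_eq_of_notMem hv, hS]; decide

/-- Claim: for `n ≥ 5`, `f(n,3,4,{0,2,3}) = n + 1`; the `({0,2,3},4)`-free 3-graphs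
on `[n]` are exactly the complete 3-graph and, for each vertex `v`, the complete
3-graph on `[n] \ {v}`. -/
theorem count_L023 (n : ℕ) (hn : 5 ≤ n) :
    numFree n 3 4 {0, 2, 3} = n + 1 ∧
    ∀ G ∈ rGraphs n 3,
      (IsLKFree n 4 {0, 2, 3} G ↔
        (G = (Finset.univ : Finset (Fin n)).powersetCard 3 ∨
          ∃ v : Fin n, G = ((Finset.univ : Finset (Fin n)).erase v).powersetCard 3)) := by
  have hiff : ∀ G ∈ rGraphs n 3,
      (IsLKFree n 4 {0, 2, 3} G ↔
        (G = (Finset.univ : Finset (Fin n)).powersetCard 3 ∨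
          ∃ v : Fin n, G = ((Finset.univ : Finset (Fin n)).erase v).powersetCard 3)) := by
    intro G hG
    have hE : ∀ e ∈ G, e.card = 3 := fun e he =>
      (mem_powersetCard.mp (mem_powerset.mp hG he)).2
    constructor
    · exact fun hf => charac hn hE hf
    · rintro (rfl | ⟨v, rfl⟩)
      · exact free_complete
      · exact free_erase v
  refine ⟨?_, hiff⟩
  have hsetmem : ∀ v : Fin n,
      ((univ : Finset (Fin n)).erase v).powersetCard 3 ∈ rGraphs n 3 := by
    intro v
    exact mem_powerset.mpr (powersetCard_mono (erase_subset v univ))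
  have hKmem : (univ : Finset (Fin n)).powersetCard 3 ∈ rGraphs n 3 :=
    mem_powerset.mpr Subset.rfl
  have hset : (rGraphs n 3).filter (IsLKFree n 4 {0, 2, 3}) =
      insert ((univ : Finset (Fin n)).powersetCard 3)
        ((univ : Finset (Fin n)).image fun v =>
          ((univ : Finset (Fin n)).erase v).powersetCard 3) := by
    ext G
    simp only [mem_filter, mem_insert, mem_image, mem_univ, true_and]
    constructor
    · rintro ⟨hG, hf⟩
      rcases (hiff G hG).mp hf with h | ⟨v, h⟩
      · exact Or.inl h
      · exact Or.inr ⟨v, h.symm⟩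
    · rintro (rfl | ⟨v, rfl⟩)
      · exact ⟨hKmem, free_complete⟩
      · exact ⟨hsetmem v, free_erase v⟩
  have hcard_erase : ∀ v : Fin n, ((univ : Finset (Fin n)).erase v).card = n - 1 := by
    intro v
    rw [card_erase_of_mem (mem_univ v), card_univ, Fintype.card_fin]
  have hnotmem : (univ : Finset (Fin n)).powersetCard 3 ∉
      (univ : Finset (Fin n)).image (fun v =>
        ((univ : Finset (Fin n)).erase v).powersetCard 3) := by
    rw [mem_image]
    rintro ⟨v, -, hv⟩
    obtain ⟨w, hw, x, hx, hwx⟩ : ∃ w ∈ (univ : Finset (Fin n)).erase v,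
        ∃ x ∈ (univ : Finset (Fin n)).erase v, w ≠ x := by
      rw [← Finset.one_lt_card]
      rw [hcard_erase v]; omega
    have hwv : w ≠ v := (mem_erase.mp hw).1
    have hxv : x ≠ v := (mem_erase.mp hx).1
    have ht3 : ({v,w,x}:Finset (Fin n)).card = 3 := by
      simp [card_insert_of_notMem, hwv.symm, hxv.symm, hwx]
    have htK : ({v,w,x}:Finset (Fin n)) ∈ (univ : Finset (Fin n)).powersetCard 3 :=
      mem_powersetCard.mpr ⟨subset_univ _, ht3⟩
    rw [← hv] at htK
    have := (mem_powersetCard.mp htK).1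
    rw [subset_erase] at this
    exact this.2 (by simp)
  have hinj : Function.Injective (fun v : Fin n =>
      ((univ : Finset (Fin n)).erase v).powersetCard 3) := by
    intro v w h
    by_contra hvw
    obtain ⟨x, hx, y, hy, hxy⟩ : ∃ x ∈ ((univ : Finset (Fin n)).erase v).erase w,
        ∃ y ∈ ((univ : Finset (Fin n)).erase v).erase w, x ≠ y := by
      rw [← Finset.one_lt_card, card_erase_of_mem
        (mem_erase.mpr ⟨fun hh => hvw hh.symm, mem_univ w⟩), hcard_erase v]
      omega
    have hxw : x ≠ w := (mem_erase.mp hx).1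
    have hxv : x ≠ v := (mem_erase.mp (mem_of_mem_erase hx)).1
    have hyw : y ≠ w := (mem_erase.mp hy).1
    have hyv : y ≠ v := (mem_erase.mp (mem_of_mem_erase hy)).1
    have ht3 : ({w,x,y}:Finset (Fin n)).card = 3 := by
      simp [card_insert_of_notMem, hxw.symm, hyw.symm, hxy]
    have htv : ({w,x,y}:Finset (Fin n)) ∈ ((univ : Finset (Fin n)).erase v).powersetCard 3 := by
      refine mem_powersetCard.mpr ⟨?_, ht3⟩
      rw [subset_erase]
      refine ⟨subset_univ _, ?_⟩
      simp only [mem_insert, mem_singleton, not_or]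
      exact ⟨hvw, fun hh => hxv hh.symm, fun hh => hyv hh.symm⟩
    have h' : ((univ : Finset (Fin n)).erase v).powersetCard 3 =
        ((univ : Finset (Fin n)).erase w).powersetCard 3 := h
    rw [h'] at htv
    have := (mem_powersetCard.mp htv).1
    rw [subset_erase] at this
    exact this.2 (by simp)
  rw [numFree, hset, card_insert_of_notMem hnotmem,
    card_image_of_injective _ hinj, card_univ, Fintype.card_fin]
end

section
/- Every finite simple graph that contains no triangle and no induced matching of size 2 has chromatic number at most 3. -/
/-- Every finite simple graph with no triangle and no induced matching of size 2
has chromatic number at most 3. -/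
theorem chromatic_of_triangleFree_inducedMatchingFree
    {V : Type*} [Fintype V] (G : SimpleGraph V)
    (htriangle : G.CliqueFree 3)
    (hmatching : ¬ ∃ a b c d : V, a ≠ b ∧ a ≠ c ∧ a ≠ d ∧ b ≠ c ∧ b ≠ d ∧ c ≠ d ∧
      G.Adj a b ∧ G.Adj c d ∧
      ¬ G.Adj a c ∧ ¬ G.Adj a d ∧ ¬ G.Adj b c ∧ ¬ G.Adj b d) :
    G.chromaticNumber ≤ 3 := by
  classical
  have htri : ∀ a b c : V, G.Adj a b → G.Adj a c → G.Adj b c → False := by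
    intro a b c hab hac hbc
    exact htriangle {a, b, c} (SimpleGraph.is3Clique_triple_iff.mpr ⟨hab, hac, hbc⟩)
  have hcol : G.Colorable 3 := by
    by_cases h : ∃ x y : V, G.Adj x y
    · obtain ⟨x, y, hxy⟩ := h
      refine ⟨SimpleGraph.Coloring.mk
        (fun v => if G.Adj x v then 0 else if G.Adj y v then 1 else 2) ?_⟩
      intro u v huv hcolor
      by_cases hxu : G.Adj x u
      · by_cases hxv : G.Adj x v
        · exact htri x u v hxu hxv huv
        · simp [hxu, hxv] at hcolor
          split at hcolor <;> simp_all
      · by_cases hxv : G.Adj x v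
        · simp [hxu, hxv] at hcolor
          split at hcolor <;> simp_all
        · by_cases hyu : G.Adj y u
          · by_cases hyv : G.Adj y v
            · exact htri y u v hyu hyv huv
            · simp [hxu, hxv, hyu, hyv] at hcolor
          · by_cases hyv : G.Adj y v
            · simp [hxu, hxv, hyu, hyv] at hcolor
            · -- u, v both nonadjacent to x and y : induced 2K2
              have hux : u ≠ x := fun h => hxv (h ▸ huv)
              have huy : u ≠ y := by
                intro h; subst h; exact hyv huv
              have hvx : v ≠ x := fun h => hxu (h ▸ huv.symm)
              have hvy : v ≠ y := by
                intro h; subst h; exact hyu huv.symm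
              exact hmatching ⟨x, y, u, v, hxy.ne, hux.symm, hvx.symm, huy.symm,
                hvy.symm, huv.ne, hxy, huv, hxu, hxv, hyu, hyv⟩
    · push_neg at h
      exact ⟨SimpleGraph.Coloring.mk (fun _ => 0) (fun {u v} huv => absurd huv (h u v))⟩
  exact hcol.chromaticNumber_le
end
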